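/- arXiv:2002.03731 — 14 statements merged into one kernel-verified Lean document; each statement's English description precedes it below -/
import Mathlib

section
/- Let X ∈ ℝ^{n×d}, X' ∈ ℝ^{n'×d'}, X'' ∈ ℝ^{n''×d''} be matrices with probability vectors w ∈ ℝ^n, w' ∈ ℝ^{n'}, w'' ∈ ℝ^{n''}, v ∈ ℝ^d, v' ∈ ℝ^{d'}, v'' ∈ ℝ^{d''}, and let L : ℝ×ℝ → [0,∞) be a cost function satisfying the triangle inequality L(a,c) ≤ L(a,b) + L(b,c) for all a,b,c ∈ ℝ. Then COOT(X, X'', w, w'', v, v'') ≤ COOT(X, X', w, w', v, v') + COOT(X', X'', w', w'', v', v''). -/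
open Finset Matrix

/-- A probability vector: nonnegative entries summing to 1. -/
def IsProbVec {n : ℕ} (w : Fin n → ℝ) : Prop :=
  (∀ i, 0 ≤ w i) ∧ ∑ i, w i = 1

/-- The transport polytope `Π(w, w')`. -/
def TransportPolytope {n n' : ℕ} (w : Fin n → ℝ) (w' : Fin n' → ℝ) :
    Set (Matrix (Fin n) (Fin n') ℝ) :=
  {π | (∀ i j, 0 ≤ π i j) ∧ (∀ i, ∑ j, π i j = w i) ∧ (∀ j, ∑ i, π i j = w' j)}

/-- The CO-Optimal Transport objective. -/
def cootCost {n d n' d' : ℕ} (L : ℝ → ℝ → ℝ)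
    (X : Matrix (Fin n) (Fin d) ℝ) (X' : Matrix (Fin n') (Fin d') ℝ)
    (πs : Matrix (Fin n) (Fin n') ℝ) (πv : Matrix (Fin d) (Fin d') ℝ) : ℝ :=
  ∑ i, ∑ j, ∑ k, ∑ l, L (X i k) (X' j l) * πs i j * πv k l

/-- The CO-Optimal Transport value. -/
noncomputable def COOT {n d n' d' : ℕ} (L : ℝ → ℝ → ℝ)
    (X : Matrix (Fin n) (Fin d) ℝ) (X' : Matrix (Fin n') (Fin d') ℝ)
    (w : Fin n → ℝ) (w' : Fin n' → ℝ) (v : Fin d → ℝ) (v' : Fin d' → ℝ) : ℝ :=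
  sInf {r | ∃ πs ∈ TransportPolytope w w', ∃ πv ∈ TransportPolytope v v',
    r = cootCost L X X' πs πv}

/-! ### Auxiliary lemmas -/

lemma tp_col_zero {n n' : ℕ} {w : Fin n → ℝ} {w' : Fin n' → ℝ}
    {π : Matrix (Fin n) (Fin n') ℝ} (hπ : π ∈ TransportPolytope w w')
    {j : Fin n'} (hj : w' j = 0) (i : Fin n) : π i j = 0 := by
  have h := (hπ.2.2 j).trans hj
  exact (Finset.sum_eq_zero_iff_of_nonneg (fun i _ => hπ.1 i j)).mp h i (mem_univ i)

lemma tp_row_zero {n n' : ℕ} {w : Fin n → ℝ} {w' : Fin n' → ℝ}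
    {π : Matrix (Fin n) (Fin n') ℝ} (hπ : π ∈ TransportPolytope w w')
    {i : Fin n} (hi : w i = 0) (j : Fin n') : π i j = 0 := by
  have h := (hπ.2.1 i).trans hi
  exact (Finset.sum_eq_zero_iff_of_nonneg (fun j _ => hπ.1 i j)).mp h j (mem_univ j)

lemma norm_cancel (x u : ℝ) (h : u = 0 → x = 0) :
    x * u * (if u = 0 then 0 else u⁻¹) = x := by
  by_cases hu : u = 0
  · simp [hu, h hu]
  · rw [if_neg hu, mul_assoc, mul_inv_cancel₀ hu, mul_one]

/-- The glued coupling of two couplings sharing the middle marginal `u`. -/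
noncomputable def glue {a b c : ℕ} (u : Fin b → ℝ) (π1 : Matrix (Fin a) (Fin b) ℝ)
    (π2 : Matrix (Fin b) (Fin c) ℝ) : Matrix (Fin a) (Fin c) ℝ :=
  fun i k => ∑ j, π1 i j * π2 j k * (if u j = 0 then 0 else (u j)⁻¹)

lemma glue_mem {a b c : ℕ} {w : Fin a → ℝ} {u : Fin b → ℝ} {w'' : Fin c → ℝ}
    {π1 : Matrix (Fin a) (Fin b) ℝ} {π2 : Matrix (Fin b) (Fin c) ℝ}
    (hu : ∀ j, 0 ≤ u j)
    (h1 : π1 ∈ TransportPolytope w u) (h2 : π2 ∈ TransportPolytope u w'') :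
    glue u π1 π2 ∈ TransportPolytope w w'' := by
  refine ⟨fun i k => ?_, fun i => ?_, fun k => ?_⟩
  · refine Finset.sum_nonneg fun j _ => ?_
    have h : (0:ℝ) ≤ if u j = 0 then 0 else (u j)⁻¹ := by
      split
      · exact le_refl 0
      · exact inv_nonneg.2 (hu j)
    exact mul_nonneg (mul_nonneg (h1.1 i j) (h2.1 j k)) h
  · simp only [glue]
    rw [Finset.sum_comm]
    calc ∑ j, ∑ k, π1 i j * π2 j k * (if u j = 0 then 0 else (u j)⁻¹)
        = ∑ j, π1 i j := by
          refine Finset.sum_congr rfl fun j _ => ?_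
          rw [← Finset.sum_mul, ← Finset.mul_sum, h2.2.1 j]
          exact norm_cancel _ _ (fun h => tp_col_zero h1 h i)
      _ = w i := h1.2.1 i
  · simp only [glue]
    calc ∑ i, ∑ j, π1 i j * π2 j k * (if u j = 0 then 0 else (u j)⁻¹)
        = ∑ j, ∑ i, π1 i j * π2 j k * (if u j = 0 then 0 else (u j)⁻¹) := Finset.sum_comm
      _ = ∑ j, π2 j k := by
          refine Finset.sum_congr rfl fun j _ => ?_
          have : ∑ i, π1 i j * π2 j k * (if u j = 0 then 0 else (u j)⁻¹)
              = π2 j k * (∑ i, π1 i j) * (if u j = 0 then 0 else (u j)⁻¹) := by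
            rw [Finset.mul_sum, Finset.sum_mul]
            exact Finset.sum_congr rfl fun i _ => by ring
          rw [this, h1.2.2 j]
          exact norm_cancel _ _ (fun h => tp_row_zero h2 h k)
      _ = w'' k := h2.2.2 k

lemma expand_prod {α β : Type*} [Fintype α] [Fintype β] (c : ℝ) (f : α → ℝ) (g : β → ℝ) :
    c * (∑ j, f j) * (∑ l', g l') = ∑ j, ∑ l', c * f j * g l' := by
  rw [mul_assoc, Finset.sum_mul_sum, Finset.mul_sum]
  exact Finset.sum_congr rfl fun j _ => by
    rw [Finset.mul_sum]; exact Finset.sum_congr rfl fun l' _ => by ring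

lemma sum_factor {α β : Type*} [Fintype α] [Fintype β] (c a r b s : ℝ) (f : α → ℝ) (g : β → ℝ) :
    ∑ m, ∑ l, c * (a * f m * r) * (b * g l * s)
      = c * (a * (∑ m, f m) * r) * (b * (∑ l, g l) * s) := by
  calc ∑ m, ∑ l, c * (a * f m * r) * (b * g l * s)
      = ∑ m, ∑ l, (c * a * r * b * s) * (f m * g l) := by
        exact Finset.sum_congr rfl fun m _ => Finset.sum_congr rfl fun l _ => by ring
    _ = (c * a * r * b * s) * ∑ m, ∑ l, f m * g l := by
        simp only [← Finset.mul_sum]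
    _ = (c * a * r * b * s) * ((∑ m, f m) * (∑ l, g l)) := by rw [Finset.sum_mul_sum]
    _ = c * (a * (∑ m, f m) * r) * (b * (∑ l, g l) * s) := by ring

lemma sum_factor' {α β : Type*} [Fintype α] [Fintype β] (c a r b s : ℝ) (f : α → ℝ) (g : β → ℝ) :
    ∑ m, ∑ l, c * (f m * a * r) * (g l * b * s)
      = c * ((∑ m, f m) * a * r) * ((∑ l, g l) * b * s) := by
  calc ∑ m, ∑ l, c * (f m * a * r) * (g l * b * s)
      = ∑ m, ∑ l, (c * a * r * b * s) * (f m * g l) := by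
        exact Finset.sum_congr rfl fun m _ => Finset.sum_congr rfl fun l _ => by ring
    _ = (c * a * r * b * s) * ∑ m, ∑ l, f m * g l := by
        simp only [← Finset.mul_sum]
    _ = (c * a * r * b * s) * ((∑ m, f m) * (∑ l, g l)) := by rw [Finset.sum_mul_sum]
    _ = c * ((∑ m, f m) * a * r) * ((∑ l, g l) * b * s) := by ring

lemma reorderA {α β γ δ ε ζ : Type*} [Fintype α] [Fintype β] [Fintype γ] [Fintype δ]
    [Fintype ε] [Fintype ζ] (f : α → β → γ → δ → ε → ζ → ℝ) :
    ∑ i, ∑ m, ∑ k, ∑ l, ∑ j, ∑ l', f i m k l j l'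
      = ∑ i, ∑ j, ∑ k, ∑ l', ∑ m, ∑ l, f i m k l j l' := by
  conv_lhs => enter [2, i, 2, m, 2, k]; rw [Finset.sum_comm]
  conv_lhs => enter [2, i, 2, m]; rw [Finset.sum_comm]
  conv_lhs => enter [2, i]; rw [Finset.sum_comm]
  conv_lhs => enter [2, i, 2, j]; rw [Finset.sum_comm]
  conv_lhs => enter [2, i, 2, j, 2, k, 2, m]; rw [Finset.sum_comm]
  conv_lhs => enter [2, i, 2, j, 2, k]; rw [Finset.sum_comm]

lemma reorderB {α β γ δ ε ζ : Type*} [Fintype α] [Fintype β] [Fintype γ] [Fintype δ]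
    [Fintype ε] [Fintype ζ] (f : α → β → γ → δ → ε → ζ → ℝ) :
    ∑ i, ∑ m, ∑ k, ∑ l, ∑ j, ∑ l', f i m k l j l'
      = ∑ j, ∑ m, ∑ l', ∑ l, ∑ i, ∑ k, f i m k l j l' := by
  conv_lhs => enter [2, i, 2, m, 2, k]; rw [Finset.sum_comm]
  conv_lhs => enter [2, i, 2, m]; rw [Finset.sum_comm]
  conv_lhs => enter [2, i]; rw [Finset.sum_comm]
  rw [Finset.sum_comm]
  conv_lhs => enter [2, j, 2, i, 2, m, 2, k]; rw [Finset.sum_comm]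
  conv_lhs => enter [2, j, 2, i, 2, m]; rw [Finset.sum_comm]
  conv_lhs => enter [2, j]; rw [Finset.sum_comm]
  conv_lhs => enter [2, j, 2, m]; rw [Finset.sum_comm]
  conv_lhs => enter [2, j, 2, m, 2, l', 2, i]; rw [Finset.sum_comm]
  conv_lhs => enter [2, j, 2, m, 2, l']; rw [Finset.sum_comm]

lemma glue_cost_le {n d n' d' n'' d'' : ℕ}
    (X : Matrix (Fin n) (Fin d) ℝ) (X' : Matrix (Fin n') (Fin d') ℝ)
    (X'' : Matrix (Fin n'') (Fin d'') ℝ)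
    {w : Fin n → ℝ} {w' : Fin n' → ℝ} {w'' : Fin n'' → ℝ}
    {v : Fin d → ℝ} {v' : Fin d' → ℝ} {v'' : Fin d'' → ℝ}
    (hw' : ∀ j, 0 ≤ w' j) (hv' : ∀ l', 0 ≤ v' l')
    {πs1 : Matrix (Fin n) (Fin n') ℝ} {πs2 : Matrix (Fin n') (Fin n'') ℝ}
    {πv1 : Matrix (Fin d) (Fin d') ℝ} {πv2 : Matrix (Fin d') (Fin d'') ℝ}
    (hs1 : πs1 ∈ TransportPolytope w w') (hs2 : πs2 ∈ TransportPolytope w' w'')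
    (hv1 : πv1 ∈ TransportPolytope v v') (hv2 : πv2 ∈ TransportPolytope v' v'')
    (L : ℝ → ℝ → ℝ) (hL0 : ∀ a b, 0 ≤ L a b)
    (hLtri : ∀ a b c, L a c ≤ L a b + L b c) :
    cootCost L X X'' (glue w' πs1 πs2) (glue v' πv1 πv2)
      ≤ cootCost L X X' πs1 πv1 + cootCost L X' X'' πs2 πv2 := by
  set r : Fin n' → ℝ := fun j => if w' j = 0 then 0 else (w' j)⁻¹ with hr
  set s : Fin d' → ℝ := fun l' => if v' l' = 0 then 0 else (v' l')⁻¹ with hs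
  have hr0 : ∀ j, 0 ≤ r j := fun j => by
    rw [hr]; dsimp only; split
    · exact le_refl 0
    · exact inv_nonneg.2 (hw' j)
  have hs0 : ∀ l', 0 ≤ s l' := fun l' => by
    rw [hs]; dsimp only; split
    · exact le_refl 0
    · exact inv_nonneg.2 (hv' l')
  have hfac : ∀ (i : Fin n) (m : Fin n'') (k : Fin d) (l : Fin d'') (j : Fin n') (l' : Fin d'),
      0 ≤ (πs1 i j * πs2 j m * r j) * (πv1 k l' * πv2 l' l * s l') :=
    fun i m k l j l' => mul_nonneg
      (mul_nonneg (mul_nonneg (hs1.1 i j) (hs2.1 j m)) (hr0 j))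
      (mul_nonneg (mul_nonneg (hv1.1 k l') (hv2.1 l' l)) (hs0 l'))
  calc cootCost L X X'' (glue w' πs1 πs2) (glue v' πv1 πv2)
      = ∑ i, ∑ m, ∑ k, ∑ l, ∑ j, ∑ l',
          L (X i k) (X'' m l) * (πs1 i j * πs2 j m * r j) * (πv1 k l' * πv2 l' l * s l') := by
        unfold cootCost glue
        refine Finset.sum_congr rfl fun i _ => Finset.sum_congr rfl fun m _ =>
          Finset.sum_congr rfl fun k _ => Finset.sum_congr rfl fun l _ => ?_
        exact expand_prod _ _ _
    _ ≤ ∑ i, ∑ m, ∑ k, ∑ l, ∑ j, ∑ l',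
          (L (X i k) (X' j l') + L (X' j l') (X'' m l)) *
            (πs1 i j * πs2 j m * r j) * (πv1 k l' * πv2 l' l * s l') := by
        refine Finset.sum_le_sum fun i _ => Finset.sum_le_sum fun m _ =>
          Finset.sum_le_sum fun k _ => Finset.sum_le_sum fun l _ =>
          Finset.sum_le_sum fun j _ => Finset.sum_le_sum fun l' _ => ?_
        have h := hfac i m k l j l'
        calc L (X i k) (X'' m l) * (πs1 i j * πs2 j m * r j) * (πv1 k l' * πv2 l' l * s l')
            = L (X i k) (X'' m l) * ((πs1 i j * πs2 j m * r j) * (πv1 k l' * πv2 l' l * s l')) := by ring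
          _ ≤ (L (X i k) (X' j l') + L (X' j l') (X'' m l)) *
                ((πs1 i j * πs2 j m * r j) * (πv1 k l' * πv2 l' l * s l')) :=
              mul_le_mul_of_nonneg_right (hLtri _ (X' j l') _) h
          _ = (L (X i k) (X' j l') + L (X' j l') (X'' m l)) *
                (πs1 i j * πs2 j m * r j) * (πv1 k l' * πv2 l' l * s l') := by ring
    _ = (∑ i, ∑ m, ∑ k, ∑ l, ∑ j, ∑ l',
          L (X i k) (X' j l') * (πs1 i j * πs2 j m * r j) * (πv1 k l' * πv2 l' l * s l'))
        + (∑ i, ∑ m, ∑ k, ∑ l, ∑ j, ∑ l',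
          L (X' j l') (X'' m l) * (πs1 i j * πs2 j m * r j) * (πv1 k l' * πv2 l' l * s l')) := by
        simp only [add_mul, Finset.sum_add_distrib]
    _ = cootCost L X X' πs1 πv1 + cootCost L X' X'' πs2 πv2 := by
        congr 1
        · rw [reorderA]
          unfold cootCost
          refine Finset.sum_congr rfl fun i _ => Finset.sum_congr rfl fun j _ =>
            Finset.sum_congr rfl fun k _ => Finset.sum_congr rfl fun l' _ => ?_
          rw [sum_factor, hs2.2.1 j, hv2.2.1 l']
          rw [show πs1 i j * w' j * r j = πs1 i j from
            norm_cancel _ _ (fun h => tp_col_zero hs1 h i)]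
          rw [show πv1 k l' * v' l' * s l' = πv1 k l' from
            norm_cancel _ _ (fun h => tp_col_zero hv1 h k)]
        · rw [reorderB]
          unfold cootCost
          refine Finset.sum_congr rfl fun j _ => Finset.sum_congr rfl fun m _ =>
            Finset.sum_congr rfl fun l' _ => Finset.sum_congr rfl fun l _ => ?_
          rw [sum_factor', hs1.2.2 j, hv1.2.2 l']
          rw [show w' j * πs2 j m * r j = πs2 j m from by
            rw [mul_comm (w' j)]; exact norm_cancel _ _ (fun h => tp_row_zero hs2 h m)]
          rw [show v' l' * πv2 l' l * s l' = πv2 l' l from by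
            rw [mul_comm (v' l')]; exact norm_cancel _ _ (fun h => tp_row_zero hv2 h l)]

lemma prod_coupling_mem {n n' : ℕ} {w : Fin n → ℝ} {w' : Fin n' → ℝ}
    (hw : IsProbVec w) (hw' : IsProbVec w') :
    (Matrix.of fun i j => w i * w' j) ∈ TransportPolytope w w' := by
  refine ⟨fun i j => mul_nonneg (hw.1 i) (hw'.1 j), fun i => ?_, fun j => ?_⟩
  · simp [← Finset.mul_sum, hw'.2]
  · simp [← Finset.sum_mul, hw.2]

lemma cootCost_nonneg {n d n' d' : ℕ} (L : ℝ → ℝ → ℝ) (hL0 : ∀ a b, 0 ≤ L a b)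
    {X : Matrix (Fin n) (Fin d) ℝ} {X' : Matrix (Fin n') (Fin d') ℝ}
    {w : Fin n → ℝ} {w' : Fin n' → ℝ} {v : Fin d → ℝ} {v' : Fin d' → ℝ}
    {πs : Matrix (Fin n) (Fin n') ℝ} {πv : Matrix (Fin d) (Fin d') ℝ}
    (hπs : πs ∈ TransportPolytope w w') (hπv : πv ∈ TransportPolytope v v') :
    0 ≤ cootCost L X X' πs πv := by
  refine Finset.sum_nonneg fun i _ => Finset.sum_nonneg fun j _ =>
    Finset.sum_nonneg fun k _ => Finset.sum_nonneg fun l _ => ?_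
  exact mul_nonneg (mul_nonneg (hL0 _ _) (hπs.1 i j)) (hπv.1 k l)

theorem coot_triangle_inequality {n d n' d' n'' d'' : ℕ}
    (X : Matrix (Fin n) (Fin d) ℝ) (X' : Matrix (Fin n') (Fin d') ℝ)
    (X'' : Matrix (Fin n'') (Fin d'') ℝ)
    (w : Fin n → ℝ) (w' : Fin n' → ℝ) (w'' : Fin n'' → ℝ)
    (v : Fin d → ℝ) (v' : Fin d' → ℝ) (v'' : Fin d'' → ℝ)
    (hw : IsProbVec w) (hw' : IsProbVec w') (hw'' : IsProbVec w'')
    (hv : IsProbVec v) (hv' : IsProbVec v') (hv'' : IsProbVec v'')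
    (L : ℝ → ℝ → ℝ) (hL0 : ∀ a b, 0 ≤ L a b)
    (hLtri : ∀ a b c, L a c ≤ L a b + L b c) :
    COOT L X X'' w w'' v v'' ≤
      COOT L X X' w w' v v' + COOT L X' X'' w' w'' v' v'' := by
  set S13 := {r | ∃ πs ∈ TransportPolytope w w'', ∃ πv ∈ TransportPolytope v v'',
    r = cootCost L X X'' πs πv} with hS13
  set S12 := {r | ∃ πs ∈ TransportPolytope w w', ∃ πv ∈ TransportPolytope v v',
    r = cootCost L X X' πs πv} with hS12
  set S23 := {r | ∃ πs ∈ TransportPolytope w' w'', ∃ πv ∈ TransportPolytope v' v'',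
    r = cootCost L X' X'' πs πv} with hS23
  have bdd13 : BddBelow S13 := ⟨0, fun r hr => by
    obtain ⟨πs, hπs, πv, hπv, rfl⟩ := hr
    exact cootCost_nonneg L hL0 hπs hπv⟩
  have ne12 : S12.Nonempty :=
    ⟨_, _, prod_coupling_mem hw hw', _, prod_coupling_mem hv hv', rfl⟩
  have ne23 : S23.Nonempty :=
    ⟨_, _, prod_coupling_mem hw' hw'', _, prod_coupling_mem hv' hv'', rfl⟩
  have key : ∀ r1 ∈ S12, ∀ r2 ∈ S23, COOT L X X'' w w'' v v'' ≤ r1 + r2 := by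
    rintro r1 ⟨πs1, hπs1, πv1, hπv1, rfl⟩ r2 ⟨πs2, hπs2, πv2, hπv2, rfl⟩
    have hmem : cootCost L X X'' (glue w' πs1 πs2) (glue v' πv1 πv2) ∈ S13 :=
      ⟨glue w' πs1 πs2, glue_mem hw'.1 hπs1 hπs2, glue v' πv1 πv2,
        glue_mem hv'.1 hπv1 hπv2, rfl⟩
    exact le_trans (csInf_le bdd13 hmem)
      (glue_cost_le X X' X'' hw'.1 hv'.1 hπs1 hπs2 hπv1 hπv2 L hL0 hLtri)
  have h2 : ∀ r1 ∈ S12, COOT L X X'' w w'' v v'' - r1 ≤ sInf S23 := fun r1 hr1 =>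
    le_csInf ne23 fun r2 hr2 => by linarith [key r1 hr1 r2 hr2]
  have h1 : COOT L X X'' w w'' v v'' - sInf S23 ≤ sInf S12 :=
    le_csInf ne12 fun r1 hr1 => by linarith [h2 r1 hr1]
  have e12 : COOT L X X' w w' v v' = sInf S12 := rfl
  have e23 : COOT L X' X'' w' w'' v' v'' = sInf S23 := rfl
  rw [e12, e23]
  linarith
end

section
/- Let X, X' ∈ ℝ^{n×d} be matrices, let all weights be uniform (w = w' = 𝟙_n/n, v = v' = 𝟙_d/d), and let L : ℝ×ℝ → [0,∞) satisfy L(a,a) = 0 for all a ∈ ℝ. If there exist permutations σ₁ of {1,…,n} and σ₂ of {1,…,d} such that X_{i,k} = X'_{σ₁(i),σ₂(k)} for all i,k, then COOT(X, X', w, w', v, v') = 0. -/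
open Finset Matrix

theorem coot_eq_zero_of_perm {n d : ℕ} (hn : 0 < n) (hd : 0 < d)
    (X X' : Matrix (Fin n) (Fin d) ℝ)
    (L : ℝ → ℝ → ℝ) (hL0 : ∀ a b, 0 ≤ L a b) (hLdiag : ∀ a, L a a = 0)
    (σ₁ : Equiv.Perm (Fin n)) (σ₂ : Equiv.Perm (Fin d))
    (hperm : ∀ i k, X i k = X' (σ₁ i) (σ₂ k)) :
    COOT L X X' (fun _ => (n : ℝ)⁻¹) (fun _ => (n : ℝ)⁻¹)
      (fun _ => (d : ℝ)⁻¹) (fun _ => (d : ℝ)⁻¹) = 0 := by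

  classical
  have key : ∀ {m : ℕ} (hm : 0 < m) (σ : Equiv.Perm (Fin m)),
      (fun i j => if σ i = j then (m : ℝ)⁻¹ else 0) ∈
        TransportPolytope (fun _ : Fin m => (m : ℝ)⁻¹) (fun _ : Fin m => (m : ℝ)⁻¹) := by
    intro m hm σ
    refine ⟨fun i j => ?_, fun i => ?_, fun j => ?_⟩
    · dsimp only; split <;> positivity
    · simp
    · rw [Finset.sum_eq_single (σ.symm j)]
      · simp
      · intro i _ hi
        simp only [ite_eq_right_iff]
        intro h; exact absurd (σ.symm_apply_eq.mpr h.symm).symm hi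
      · simp
  have hmem : (0 : ℝ) ∈ {r | ∃ πs ∈ TransportPolytope (fun _ : Fin n => (n : ℝ)⁻¹)
        (fun _ : Fin n => (n : ℝ)⁻¹), ∃ πv ∈ TransportPolytope (fun _ : Fin d => (d : ℝ)⁻¹)
        (fun _ : Fin d => (d : ℝ)⁻¹), r = cootCost L X X' πs πv} := by
    refine ⟨_, key hn σ₁, _, key hd σ₂, ?_⟩
    unfold cootCost
    symm
    apply Finset.sum_eq_zero; intro i _
    apply Finset.sum_eq_zero; intro j _
    apply Finset.sum_eq_zero; intro k _
    apply Finset.sum_eq_zero; intro l _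
    by_cases h1 : σ₁ i = j
    · by_cases h2 : σ₂ k = l
      · subst h1; subst h2
        rw [← hperm, hLdiag]; ring
      · simp [h2]
    · simp [h1]
  have hbdd : ∀ r ∈ {r | ∃ πs ∈ TransportPolytope (fun _ : Fin n => (n : ℝ)⁻¹)
        (fun _ : Fin n => (n : ℝ)⁻¹), ∃ πv ∈ TransportPolytope (fun _ : Fin d => (d : ℝ)⁻¹)
        (fun _ : Fin d => (d : ℝ)⁻¹), r = cootCost L X X' πs πv}, (0:ℝ) ≤ r := by
    rintro r ⟨πs, hπs, πv, hπv, rfl⟩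
    unfold cootCost
    apply Finset.sum_nonneg; intro i _
    apply Finset.sum_nonneg; intro j _
    apply Finset.sum_nonneg; intro k _
    apply Finset.sum_nonneg; intro l _
    have := hL0 (X i k) (X' j l)
    have := hπs.1 i j
    have := hπv.1 k l
    positivity
  unfold COOT
  exact le_antisymm (csInf_le ⟨0, hbdd⟩ hmem) (le_csInf ⟨0, hmem⟩ hbdd)
end

section
/- Let X, X' ∈ ℝ^{n×d} be matrices, let all weights be uniform (w = w' = 𝟙_n/n, v = v' = 𝟙_d/d), let p ≥ 1, and let L(a,b) = |a − b|^p. If COOT(X, X', w, w', v, v') = 0 then there exist permutations σ₁ of {1,…,n} and σ₂ of {1,…,d} such that X_{i,k} = X'_{σ₁(i),σ₂(k)} for all i,k. -/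
/-!
The infimum defining COOT is attained: the transport polytopes are compact and nonempty, and the
cost is continuous in the pair of plans. At an optimal pair of zero cost, every term
`|X i k - X' j l| ^ p * πs i j * πv k l` vanishes. A plan with uniform marginals is a positive
multiple of a doubly stochastic matrix, so by Birkhoff's theorem some permutation lies in its
support; along the two permutations so obtained, `|X i k - X' (σ₁ i) (σ₂ k)| ^ p = 0`.
-/

open Finset Matrix

theorem isCompact_transportPolytope {n n' : ℕ} (w : Fin n → ℝ) (w' : Fin n' → ℝ) :
    IsCompact (TransportPolytope w w') := by
  refine (isCompact_univ_pi fun i => isCompact_univ_pi fun _ =>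
    isCompact_Icc (a := 0) (b := w i)).of_isClosed_subset ?_ ?_
  · simp only [TransportPolytope, Set.ofPred_and, Set.ofPred_forall]
    exact .inter
      (isClosed_iInter fun i => isClosed_iInter fun j => isClosed_le (by fun_prop) (by fun_prop))
      (.inter (isClosed_iInter fun i => isClosed_eq (by fun_prop) (by fun_prop))
        (isClosed_iInter fun j => isClosed_eq (by fun_prop) (by fun_prop)))
  · rintro π ⟨hπ_nonneg, hπ_row, -⟩ i - j -
    exact ⟨hπ_nonneg i j, hπ_row i ▸ single_le_sum (fun j _ => hπ_nonneg i j) (mem_univ j)⟩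

theorem diagonal_mem_transportPolytope {n : ℕ} {w : Fin n → ℝ} (hw : ∀ i, 0 ≤ w i) :
    diagonal w ∈ TransportPolytope w w := by
  refine ⟨fun i j => ?_, fun i => by simp [diagonal_apply], fun j => by simp [diagonal_apply]⟩
  by_cases h : i = j <;> simp [h, hw]

theorem exists_cootCost_eq_COOT {n d n' d' : ℕ} (L : ℝ → ℝ → ℝ)
    (X : Matrix (Fin n) (Fin d) ℝ) (X' : Matrix (Fin n') (Fin d') ℝ)
    {w : Fin n → ℝ} {w' : Fin n' → ℝ} {v : Fin d → ℝ} {v' : Fin d' → ℝ}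
    (hs : (TransportPolytope w w').Nonempty) (hv : (TransportPolytope v v').Nonempty) :
    ∃ πs ∈ TransportPolytope w w', ∃ πv ∈ TransportPolytope v v',
      cootCost L X X' πs πv = COOT L X X' w w' v v' := by
  have hcost : Continuous fun π : Matrix (Fin n) (Fin n') ℝ × Matrix (Fin d) (Fin d') ℝ =>
      cootCost L X X' π.1 π.2 := by
    unfold cootCost; fun_prop
  have hCOOT : COOT L X X' w w' v v' =
      sInf (Set.image2 (cootCost L X X') (TransportPolytope w w') (TransportPolytope v v')) := by
    simp only [COOT, Set.image2, eq_comm]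
  have hK : IsCompact
      (Set.image2 (cootCost L X X') (TransportPolytope w w') (TransportPolytope v v')) :=
    Set.image_prod _ ▸
      ((isCompact_transportPolytope w w').prod (isCompact_transportPolytope v v')).image hcost
  obtain ⟨πs, hπs, πv, hπv, h⟩ := hK.sInf_mem (hs.image2 hv)
  exact ⟨πs, hπs, πv, hπv, h.trans hCOOT.symm⟩

theorem apply_eq_zero_of_cootCost_eq_zero {n d n' d' : ℕ} {L : ℝ → ℝ → ℝ}
    {X : Matrix (Fin n) (Fin d) ℝ} {X' : Matrix (Fin n') (Fin d') ℝ}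
    {πs : Matrix (Fin n) (Fin n') ℝ} {πv : Matrix (Fin d) (Fin d') ℝ}
    (hL : ∀ a b, 0 ≤ L a b) (hs : ∀ i j, 0 ≤ πs i j) (hv : ∀ k l, 0 ≤ πv k l)
    (h : cootCost L X X' πs πv = 0) {i j k l} (hij : 0 < πs i j) (hkl : 0 < πv k l) :
    L (X i k) (X' j l) = 0 := by
  have hterm (i j k l) : 0 ≤ L (X i k) (X' j l) * πs i j * πv k l :=
    mul_nonneg (mul_nonneg (hL _ _) (hs i j)) (hv k l)
  have hle : L (X i k) (X' j l) * πs i j * πv k l ≤ cootCost L X X' πs πv :=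
    (single_le_sum (fun l _ => hterm i j k l) (mem_univ l)).trans <|
    (single_le_sum (fun k _ => sum_nonneg fun l _ => hterm i j k l) (mem_univ k)).trans <|
    (single_le_sum (fun j _ => sum_nonneg fun k _ => sum_nonneg fun l _ => hterm i j k l)
      (mem_univ j)).trans <|
    single_le_sum (fun i _ => sum_nonneg fun j _ => sum_nonneg fun k _ => sum_nonneg fun l _ =>
      hterm i j k l) (mem_univ i)
  have hterm_eq : L (X i k) (X' j l) * πs i j * πv k l = 0 := (hle.trans h.le).antisymm (hterm ..)
  simpa [hij.ne', hkl.ne'] using hterm_eq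

theorem Matrix.exists_perm_forall_pos_of_mem_doublyStochastic {ι : Type*} [Fintype ι]
    [DecidableEq ι] {M : Matrix ι ι ℝ} (hM : M ∈ doublyStochastic ℝ ι) :
    ∃ σ : Equiv.Perm ι, ∀ i, 0 < M i (σ i) := by
  obtain ⟨w, hw_nonneg, hw_sum, rfl⟩ := exists_eq_sum_perm_of_mem_doublyStochastic hM
  obtain ⟨σ, -, hσ⟩ : ∃ σ ∈ univ, (0 : ℝ) < w σ :=
    exists_lt_of_sum_lt (by simp [hw_sum])
  have hperm (τ : Equiv.Perm ι) (i j : ι) : τ.permMatrix ℝ i j = if τ i = j then 1 else 0 := by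
    simp [Equiv.Perm.permMatrix, PEquiv.toMatrix_apply, Equiv.toPEquiv_apply]
  refine ⟨σ, fun i => hσ.trans_le ?_⟩
  simp only [Matrix.sum_apply, Matrix.smul_apply, smul_eq_mul, hperm]
  calc w σ = w σ * if σ i = σ i then 1 else 0 := by simp
    _ ≤ _ := single_le_sum (f := fun τ => w τ * if τ i = σ i then 1 else 0)
        (fun τ _ => mul_nonneg (hw_nonneg τ) (by split_ifs <;> norm_num)) (mem_univ σ)

theorem exists_perm_forall_pos_of_mem_transportPolytope {n : ℕ} {c : ℝ} (hc : 0 < c)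
    {π : Matrix (Fin n) (Fin n) ℝ} (hπ : π ∈ TransportPolytope (fun _ => c) (fun _ => c)) :
    ∃ σ : Equiv.Perm (Fin n), ∀ i, 0 < π i (σ i) := by
  obtain ⟨M, hM, rfl⟩ := (exists_mem_doublyStochastic_eq_smul_iff hc.le).2 hπ
  obtain ⟨σ, hσ⟩ := exists_perm_forall_pos_of_mem_doublyStochastic hM
  exact ⟨σ, fun i => mul_pos hc (hσ i)⟩

theorem perm_of_coot_eq_zero_general {n d : ℕ} (hn : 0 < n) (hd : 0 < d)
    (X X' : Matrix (Fin n) (Fin d) ℝ) (p : ℝ)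
    (h : COOT (fun a b => |a - b| ^ p) X X'
        (fun _ => (n : ℝ)⁻¹) (fun _ => (n : ℝ)⁻¹)
        (fun _ => (d : ℝ)⁻¹) (fun _ => (d : ℝ)⁻¹) = 0) :
    ∃ (σ₁ : Equiv.Perm (Fin n)) (σ₂ : Equiv.Perm (Fin d)),
      ∀ i k, X i k = X' (σ₁ i) (σ₂ k) := by
  have hn_inv : (0 : ℝ) < (n : ℝ)⁻¹ := by positivity
  have hd_inv : (0 : ℝ) < (d : ℝ)⁻¹ := by positivity
  obtain ⟨πs, hπs, πv, hπv, hcost⟩ := exists_cootCost_eq_COOT (fun a b => |a - b| ^ p) X X'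
    ⟨_, diagonal_mem_transportPolytope fun _ => hn_inv.le⟩
    ⟨_, diagonal_mem_transportPolytope fun _ => hd_inv.le⟩
  obtain ⟨σ₁, hσ₁⟩ := exists_perm_forall_pos_of_mem_transportPolytope hn_inv hπs
  obtain ⟨σ₂, hσ₂⟩ := exists_perm_forall_pos_of_mem_transportPolytope hd_inv hπv
  refine ⟨σ₁, σ₂, fun i k => ?_⟩
  have hzero := apply_eq_zero_of_cootCost_eq_zero (fun a b => by positivity) hπs.1 hπv.1
    (hcost.trans h) (hσ₁ i) (hσ₂ k)
  rw [Real.rpow_eq_zero_iff_of_nonneg (abs_nonneg _), abs_eq_zero, sub_eq_zero] at hzero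
  exact hzero.1

theorem perm_of_coot_eq_zero {n d : ℕ} (hn : 0 < n) (hd : 0 < d)
    (X X' : Matrix (Fin n) (Fin d) ℝ) (p : ℝ) (hp : 1 ≤ p)
    (h : COOT (fun a b => |a - b| ^ p) X X'
        (fun _ => (n : ℝ)⁻¹) (fun _ => (n : ℝ)⁻¹)
        (fun _ => (d : ℝ)⁻¹) (fun _ => (d : ℝ)⁻¹) = 0) :
    ∃ (σ₁ : Equiv.Perm (Fin n)) (σ₂ : Equiv.Perm (Fin d)),
      ∀ i k, X i k = X' (σ₁ i) (σ₂ k) :=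
  perm_of_coot_eq_zero_general hn hd X X' p h
end

section
/- Let X, X' ∈ ℝ^{n×d} be matrices, let all weights be uniform (w = w' = 𝟙_n/n, v = v' = 𝟙_d/d), and let L : ℝ×ℝ → ℝ be any cost function. Then COOT(X, X', w, w', v, v') = min over permutations σ₁ of {1,…,n} and σ₂ of {1,…,d} of (1/(nd)) ∑_{i=1}^n ∑_{k=1}^d L(X_{i,k}, X'_{σ₁(i),σ₂(k)}); in particular the infimum defining COOT is attained at a pair of transport plans supported on permutations (π^s_{i,j} = (1/n)·[j = σ₁(i)], π^v_{k,l} = (1/d)·[l = σ₂(k)]). -/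
open Finset Matrix

/-!
With uniform marginals, `Π(𝟙/n, 𝟙/n)` is the Birkhoff polytope scaled by `1/n`, hence the convex
hull of the plans `(1/n) P_σ` of the permutations `σ`. The COOT objective is bilinear in
`(π^s, π^v)`: minimizing over `π^s` with `π^v` fixed and then over `π^v` with `π^s` fixed, each a
linear functional on such a polytope, never increases it and ends at a pair of permutation
plans. So the infimum is the minimum over the finitely many such pairs.
-/

open scoped Pointwise

abbrev uniformTransportPolytope (n : ℕ) : Set (Matrix (Fin n) (Fin n) ℝ) :=
  TransportPolytope (fun _ : Fin n => (n : ℝ)⁻¹) (fun _ : Fin n => (n : ℝ)⁻¹)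

noncomputable def permPlan (n : ℕ) (σ : Equiv.Perm (Fin n)) : Matrix (Fin n) (Fin n) ℝ :=
  Matrix.of fun i j => if j = σ i then (n : ℝ)⁻¹ else 0

lemma permPlan_eq_inv_smul_permMatrix {n : ℕ} (σ : Equiv.Perm (Fin n)) :
    permPlan n σ = (n : ℝ)⁻¹ • σ.permMatrix ℝ := by
  ext i j
  simp [permPlan, Equiv.Perm.permMatrix, PEquiv.toMatrix_apply, eq_comm]

lemma uniformTransportPolytope_eq_inv_smul_doublyStochastic (n : ℕ) :
    uniformTransportPolytope n =
      (n : ℝ)⁻¹ • (doublyStochastic ℝ (Fin n) : Set (Matrix (Fin n) (Fin n) ℝ)) := by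
  ext π
  simp only [TransportPolytope, Set.mem_ofPred_eq, Set.mem_smul_set, SetLike.mem_coe,
    mem_doublyStochastic_iff_sum]
  constructor
  · rintro ⟨hπ, hrow, hcol⟩
    refine ⟨(n : ℝ) • π, ⟨fun i j => ?_, fun i => ?_, fun j => ?_⟩, ?_⟩
    · simpa using mul_nonneg (Nat.cast_nonneg n) (hπ i j)
    · simp [← mul_sum, hrow, Nat.cast_ne_zero.2 (Fin.pos i).ne']
    · simp [← mul_sum, hcol, Nat.cast_ne_zero.2 (Fin.pos j).ne']
    · ext i j
      simp [Nat.cast_ne_zero.2 (Fin.pos i).ne']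
  · rintro ⟨M, ⟨hM, hrow, hcol⟩, rfl⟩
    refine ⟨fun i j => ?_, fun i => ?_, fun j => ?_⟩
    · simpa using mul_nonneg (inv_nonneg.2 (Nat.cast_nonneg n)) (hM i j)
    · simp [← mul_sum, hrow]
    · simp [← mul_sum, hcol]

lemma uniformTransportPolytope_eq_convexHull (n : ℕ) :
    uniformTransportPolytope n = convexHull ℝ (Set.range (permPlan n)) := by
  rw [uniformTransportPolytope_eq_inv_smul_doublyStochastic,
    doublyStochastic_eq_convexHull_permMatrix, ← convexHull_smul]
  congr 1
  ext M
  simp [Set.mem_smul_set, permPlan_eq_inv_smul_permMatrix]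

lemma permPlan_mem_uniformTransportPolytope {n : ℕ} (σ : Equiv.Perm (Fin n)) :
    permPlan n σ ∈ uniformTransportPolytope n := by
  rw [uniformTransportPolytope_eq_convexHull]
  exact subset_convexHull ℝ _ ⟨σ, rfl⟩

lemma exists_permPlan_le_of_mem_uniformTransportPolytope {n : ℕ}
    (f : Matrix (Fin n) (Fin n) ℝ →ₗ[ℝ] ℝ) {π : Matrix (Fin n) (Fin n) ℝ}
    (hπ : π ∈ uniformTransportPolytope n) : ∃ σ, f (permPlan n σ) ≤ f π := by
  rw [uniformTransportPolytope_eq_convexHull] at hπ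
  obtain ⟨_, ⟨σ, rfl⟩, hσ⟩ :=
    (f.concaveOn convex_univ).exists_le_of_mem_convexHull (Set.subset_univ _) hπ
  exact ⟨σ, hσ⟩

def cootCostBilin {n d n' d' : ℕ} (L : ℝ → ℝ → ℝ)
    (X : Matrix (Fin n) (Fin d) ℝ) (X' : Matrix (Fin n') (Fin d') ℝ) :
    Matrix (Fin n) (Fin n') ℝ →ₗ[ℝ] Matrix (Fin d) (Fin d') ℝ →ₗ[ℝ] ℝ :=
  LinearMap.mk₂ ℝ (cootCost L X X')
    (fun _ _ _ => by simp only [cootCost, Matrix.add_apply, mul_add, add_mul, sum_add_distrib])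
    (fun _ _ _ => by
      simp only [cootCost, Matrix.smul_apply, smul_eq_mul, mul_sum, mul_assoc, mul_left_comm])
    (fun _ _ _ => by simp only [cootCost, Matrix.add_apply, mul_add, sum_add_distrib])
    (fun _ _ _ => by
      simp only [cootCost, Matrix.smul_apply, smul_eq_mul, mul_sum, mul_assoc, mul_left_comm])

section UniformMarginals

variable {n d : ℕ} (L : ℝ → ℝ → ℝ) (X X' : Matrix (Fin n) (Fin d) ℝ)

lemma exists_perms_cootCost_permPlan_le {πs : Matrix (Fin n) (Fin n) ℝ}
    {πv : Matrix (Fin d) (Fin d) ℝ} (hπs : πs ∈ uniformTransportPolytope n)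
    (hπv : πv ∈ uniformTransportPolytope d) :
    ∃ σ₁ σ₂, cootCost L X X' (permPlan n σ₁) (permPlan d σ₂) ≤ cootCost L X X' πs πv := by
  obtain ⟨σ₁, h₁⟩ :=
    exists_permPlan_le_of_mem_uniformTransportPolytope ((cootCostBilin L X X').flip πv) hπs
  obtain ⟨σ₂, h₂⟩ :=
    exists_permPlan_le_of_mem_uniformTransportPolytope (cootCostBilin L X X' (permPlan n σ₁)) hπv
  exact ⟨σ₁, σ₂, h₂.trans h₁⟩

lemma cootCost_permPlan (σ₁ : Equiv.Perm (Fin n)) (σ₂ : Equiv.Perm (Fin d)) :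
    cootCost L X X' (permPlan n σ₁) (permPlan d σ₂)
      = (1 / ((n : ℝ) * (d : ℝ))) * ∑ i, ∑ k, L (X i k) (X' (σ₁ i) (σ₂ k)) := by
  simp only [cootCost, permPlan, Matrix.of_apply, mul_ite, ite_mul, mul_zero, zero_mul,
    sum_ite_eq', mem_univ, if_true, sum_ite_irrel, sum_const_zero, one_div, mul_inv, ← sum_mul]
  ring

lemma isLeast_cootCost_permPlan {σ₁ : Equiv.Perm (Fin n)} {σ₂ : Equiv.Perm (Fin d)}
    (hmin : ∀ τ₁ τ₂, cootCost L X X' (permPlan n σ₁) (permPlan d σ₂) ≤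
      cootCost L X X' (permPlan n τ₁) (permPlan d τ₂)) :
    IsLeast {r | ∃ πs ∈ uniformTransportPolytope n, ∃ πv ∈ uniformTransportPolytope d,
        r = cootCost L X X' πs πv}
      (cootCost L X X' (permPlan n σ₁) (permPlan d σ₂)) := by
  refine ⟨⟨_, permPlan_mem_uniformTransportPolytope σ₁, _,
    permPlan_mem_uniformTransportPolytope σ₂, rfl⟩, ?_⟩
  rintro _ ⟨πs, hπs, πv, hπv, rfl⟩
  obtain ⟨τ₁, τ₂, hτ⟩ := exists_perms_cootCost_permPlan_le L X X' hπs hπv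
  exact (hmin τ₁ τ₂).trans hτ

end UniformMarginals

theorem coot_eq_min_over_perms_general {n d : ℕ}
    (X X' : Matrix (Fin n) (Fin d) ℝ) (L : ℝ → ℝ → ℝ) :
    ∃ (σ₁ : Equiv.Perm (Fin n)) (σ₂ : Equiv.Perm (Fin d)),
      COOT L X X' (fun _ => (n : ℝ)⁻¹) (fun _ => (n : ℝ)⁻¹)
          (fun _ => (d : ℝ)⁻¹) (fun _ => (d : ℝ)⁻¹)
        = (1 / ((n : ℝ) * (d : ℝ))) * ∑ i, ∑ k, L (X i k) (X' (σ₁ i) (σ₂ k)) ∧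
      (∀ (τ₁ : Equiv.Perm (Fin n)) (τ₂ : Equiv.Perm (Fin d)),
        (1 / ((n : ℝ) * (d : ℝ))) * ∑ i, ∑ k, L (X i k) (X' (σ₁ i) (σ₂ k))
          ≤ (1 / ((n : ℝ) * (d : ℝ))) * ∑ i, ∑ k, L (X i k) (X' (τ₁ i) (τ₂ k))) ∧
      (Matrix.of fun i j => if j = σ₁ i then (n : ℝ)⁻¹ else 0) ∈
        TransportPolytope (fun _ : Fin n => (n : ℝ)⁻¹) (fun _ : Fin n => (n : ℝ)⁻¹) ∧
      (Matrix.of fun k l => if l = σ₂ k then (d : ℝ)⁻¹ else 0) ∈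
        TransportPolytope (fun _ : Fin d => (d : ℝ)⁻¹) (fun _ : Fin d => (d : ℝ)⁻¹) ∧
      cootCost L X X' (Matrix.of fun i j => if j = σ₁ i then (n : ℝ)⁻¹ else 0)
          (Matrix.of fun k l => if l = σ₂ k then (d : ℝ)⁻¹ else 0)
        = COOT L X X' (fun _ => (n : ℝ)⁻¹) (fun _ => (n : ℝ)⁻¹)
            (fun _ => (d : ℝ)⁻¹) (fun _ => (d : ℝ)⁻¹) := by
  obtain ⟨⟨σ₁, σ₂⟩, -, hmin⟩ := exists_min_image univ
    (fun p : Equiv.Perm (Fin n) × Equiv.Perm (Fin d) =>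
      cootCost L X X' (permPlan n p.1) (permPlan d p.2)) univ_nonempty
  have hCOOT : COOT L X X' (fun _ => (n : ℝ)⁻¹) (fun _ => (n : ℝ)⁻¹)
      (fun _ => (d : ℝ)⁻¹) (fun _ => (d : ℝ)⁻¹) =
        cootCost L X X' (permPlan n σ₁) (permPlan d σ₂) :=
    (isLeast_cootCost_permPlan L X X' fun τ₁ τ₂ => hmin (τ₁, τ₂) (mem_univ _)).csInf_eq
  refine ⟨σ₁, σ₂, by rw [hCOOT, cootCost_permPlan], fun τ₁ τ₂ => ?_,
    permPlan_mem_uniformTransportPolytope σ₁, permPlan_mem_uniformTransportPolytope σ₂,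
    hCOOT.symm⟩
  rw [← cootCost_permPlan, ← cootCost_permPlan]
  exact hmin (τ₁, τ₂) (mem_univ _)

theorem coot_eq_min_over_perms {n d : ℕ} (hn : 0 < n) (hd : 0 < d)
    (X X' : Matrix (Fin n) (Fin d) ℝ) (L : ℝ → ℝ → ℝ) :
    ∃ (σ₁ : Equiv.Perm (Fin n)) (σ₂ : Equiv.Perm (Fin d)),
      COOT L X X' (fun _ => (n : ℝ)⁻¹) (fun _ => (n : ℝ)⁻¹)
          (fun _ => (d : ℝ)⁻¹) (fun _ => (d : ℝ)⁻¹)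
        = (1 / ((n : ℝ) * (d : ℝ))) * ∑ i, ∑ k, L (X i k) (X' (σ₁ i) (σ₂ k)) ∧
      (∀ (τ₁ : Equiv.Perm (Fin n)) (τ₂ : Equiv.Perm (Fin d)),
        (1 / ((n : ℝ) * (d : ℝ))) * ∑ i, ∑ k, L (X i k) (X' (σ₁ i) (σ₂ k))
          ≤ (1 / ((n : ℝ) * (d : ℝ))) * ∑ i, ∑ k, L (X i k) (X' (τ₁ i) (τ₂ k))) ∧
      (Matrix.of fun i j => if j = σ₁ i then (n : ℝ)⁻¹ else 0) ∈
        TransportPolytope (fun _ : Fin n => (n : ℝ)⁻¹) (fun _ : Fin n => (n : ℝ)⁻¹) ∧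
      (Matrix.of fun k l => if l = σ₂ k then (d : ℝ)⁻¹ else 0) ∈
        TransportPolytope (fun _ : Fin d => (d : ℝ)⁻¹) (fun _ : Fin d => (d : ℝ)⁻¹) ∧
      cootCost L X X' (Matrix.of fun i j => if j = σ₁ i then (n : ℝ)⁻¹ else 0)
          (Matrix.of fun k l => if l = σ₂ k then (d : ℝ)⁻¹ else 0)
        = COOT L X X' (fun _ => (n : ℝ)⁻¹) (fun _ => (n : ℝ)⁻¹)
            (fun _ => (d : ℝ)⁻¹) (fun _ => (d : ℝ)⁻¹) :=
  coot_eq_min_over_perms_general X X' L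
end

section
/- Let C ∈ ℝ^{n×n} and C' ∈ ℝ^{n'×n'} be matrices, w ∈ ℝ^n and w' ∈ ℝ^{n'} probability vectors, and L : ℝ×ℝ → ℝ any cost function. Then COOT(C, C', w, w', w, w') ≤ GW(C, C', w, w'). -/
open Finset Matrix

/-- The Gromov–Wasserstein objective. -/
def gwCost {n n' : ℕ} (L : ℝ → ℝ → ℝ)
    (C : Matrix (Fin n) (Fin n) ℝ) (C' : Matrix (Fin n') (Fin n') ℝ)
    (π : Matrix (Fin n) (Fin n') ℝ) : ℝ :=
  ∑ i, ∑ j, ∑ k, ∑ l, L (C i k) (C' j l) * π i j * π k l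

/-- The Gromov–Wasserstein value. -/
noncomputable def GW {n n' : ℕ} (L : ℝ → ℝ → ℝ)
    (C : Matrix (Fin n) (Fin n) ℝ) (C' : Matrix (Fin n') (Fin n') ℝ)
    (w : Fin n → ℝ) (w' : Fin n' → ℝ) : ℝ :=
  sInf {r | ∃ π ∈ TransportPolytope w w', r = gwCost L C C' π}

theorem coot_le_gw {n n' : ℕ}
    (C : Matrix (Fin n) (Fin n) ℝ) (C' : Matrix (Fin n') (Fin n') ℝ)
    (w : Fin n → ℝ) (w' : Fin n' → ℝ)
    (hw : IsProbVec w) (hw' : IsProbVec w')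
    (L : ℝ → ℝ → ℝ) :
    COOT L C C' w w' w w' ≤ GW L C C' w w' := by
  have hle1 : ∀ (π : Matrix (Fin n) (Fin n') ℝ), π ∈ TransportPolytope w w' →
      ∀ i j, π i j ≤ 1 := by
    intro π hπ i j
    calc π i j ≤ ∑ j', π i j' :=
          Finset.single_le_sum (fun j' _ => hπ.1 i j') (Finset.mem_univ j)
      _ = w i := hπ.2.1 i
      _ ≤ ∑ i', w i' := Finset.single_le_sum (fun i' _ => hw.1 i') (Finset.mem_univ i)
      _ = 1 := hw.2
  apply csInf_le_csInf
  · refine ⟨-∑ i, ∑ j, ∑ k, ∑ l, |L (C i k) (C' j l)|, ?_⟩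
    rintro r ⟨πs, hπs, πv, hπv, rfl⟩
    unfold cootCost
    rw [← Finset.sum_neg_distrib]
    refine Finset.sum_le_sum fun i _ => ?_
    rw [← Finset.sum_neg_distrib]
    refine Finset.sum_le_sum fun j _ => ?_
    rw [← Finset.sum_neg_distrib]
    refine Finset.sum_le_sum fun k _ => ?_
    rw [← Finset.sum_neg_distrib]
    refine Finset.sum_le_sum fun l _ => ?_
    have ha : 0 ≤ πs i j * πv k l := mul_nonneg (hπs.1 i j) (hπv.1 k l)
    have ha1 : πs i j * πv k l ≤ 1 :=
      mul_le_one₀ (hle1 πs hπs i j) (hπv.1 k l) (hle1 πv hπv k l)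
    calc -|L (C i k) (C' j l)|
        ≤ -|L (C i k) (C' j l)| * (πs i j * πv k l) := by nlinarith [abs_nonneg (L (C i k) (C' j l))]
      _ ≤ L (C i k) (C' j l) * (πs i j * πv k l) := by
          have := neg_abs_le (L (C i k) (C' j l))
          nlinarith
      _ = L (C i k) (C' j l) * πs i j * πv k l := by ring
  · refine ⟨gwCost L C C' (fun i j => w i * w' j), fun i j => w i * w' j, ?_, rfl⟩
    refine ⟨fun i j => mul_nonneg (hw.1 i) (hw'.1 j), fun i => ?_, fun j => ?_⟩
    · rw [← Finset.mul_sum, hw'.2, mul_one]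
    · simp only [← Finset.sum_mul, hw.2, one_mul]
  · rintro r ⟨π, hπ, rfl⟩
    exact ⟨π, hπ, π, hπ, rfl⟩
end

section
/- Let X ∈ ℝ^{n×p} and X' ∈ ℝ^{n'×p'} be matrices, let C ∈ ℝ^{n×n} be the squared Euclidean distance matrix of X and C' ∈ ℝ^{n'×n'} the squared Euclidean distance matrix of X', let L(a,b) = (a−b)², and let w ∈ ℝ^n, w' ∈ ℝ^{n'} be probability vectors. Then the Gromov–Wasserstein objective π ↦ ∑_{i,j,k,l} (C_{i,k} − C'_{j,l})² π_{i,j} π_{k,l} is a concave function on the transport polytope Π(w,w'): for all π₀, π₁ ∈ Π(w,w') and t ∈ [0,1], the objective at tπ₀ + (1−t)π₁ is ≥ t times the objective at π₀ plus (1−t) times the objective at π₁. -/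
open Finset Matrix

/-! ### Auxiliary lemmas -/

private lemma z_noL {n n' : ℕ} (δ : Matrix (Fin n) (Fin n') ℝ)
    (hrow : ∀ i, ∑ j, δ i j = 0) (F : Fin n → Fin n' → Fin n → ℝ) :
    ∑ i, ∑ j, ∑ k, ∑ l, F i j k * δ i j * δ k l = 0 := by
  have h : ∀ i j k, ∑ l, F i j k * δ i j * δ k l = 0 := fun i j k => by
    rw [← Finset.mul_sum, hrow k, mul_zero]
  simp [h]

private lemma z_noK {n n' : ℕ} (δ : Matrix (Fin n) (Fin n') ℝ)
    (hcol : ∀ j, ∑ i, δ i j = 0) (F : Fin n → Fin n' → Fin n' → ℝ) :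
    ∑ i, ∑ j, ∑ k, ∑ l, F i j l * δ i j * δ k l = 0 := by
  have h : ∀ i j, ∑ k, ∑ l, F i j l * δ i j * δ k l = 0 := fun i j => by
    rw [Finset.sum_comm]
    refine Finset.sum_eq_zero fun l _ => ?_
    rw [← Finset.mul_sum, hcol l, mul_zero]
  simp [h]

private lemma z_noJ {n n' : ℕ} (δ : Matrix (Fin n) (Fin n') ℝ)
    (hrow : ∀ i, ∑ j, δ i j = 0) (F : Fin n → Fin n → Fin n' → ℝ) :
    ∑ i, ∑ j, ∑ k, ∑ l, F i k l * δ i j * δ k l = 0 := by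
  have h : ∀ i, ∑ j, ∑ k, ∑ l, F i k l * δ i j * δ k l = 0 := fun i => by
    have step : ∀ j, ∑ k, ∑ l, F i k l * δ i j * δ k l
        = δ i j * ∑ k, ∑ l, F i k l * δ k l := fun j => by
      rw [Finset.mul_sum]
      refine Finset.sum_congr rfl fun k _ => ?_
      rw [Finset.mul_sum]
      exact Finset.sum_congr rfl fun l _ => by ring
    simp_rw [step]
    rw [← Finset.sum_mul, hrow i, zero_mul]
  simp [h]

private lemma z_noI {n n' : ℕ} (δ : Matrix (Fin n) (Fin n') ℝ)
    (hcol : ∀ j, ∑ i, δ i j = 0) (F : Fin n' → Fin n → Fin n' → ℝ) :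
    ∑ i, ∑ j, ∑ k, ∑ l, F j k l * δ i j * δ k l = 0 := by
  rw [Finset.sum_comm]
  have h : ∀ j, ∑ i, ∑ k, ∑ l, F j k l * δ i j * δ k l = 0 := fun j => by
    have step : ∀ i, ∑ k, ∑ l, F j k l * δ i j * δ k l
        = δ i j * ∑ k, ∑ l, F j k l * δ k l := fun i => by
      rw [Finset.mul_sum]
      refine Finset.sum_congr rfl fun k _ => ?_
      rw [Finset.mul_sum]
      exact Finset.sum_congr rfl fun l _ => by ring
    simp_rw [step]
    rw [← Finset.sum_mul, hcol j, zero_mul]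
  simp [h]

private lemma const_mul_sum4 {n n' : ℕ} (c : ℝ) (f : Fin n → Fin n' → Fin n → Fin n' → ℝ) :
    c * ∑ i, ∑ j, ∑ k, ∑ l, f i j k l = ∑ i, ∑ j, ∑ k, ∑ l, c * f i j k l := by
  simp [Finset.mul_sum]

private lemma comm6 {n n' p p' : ℕ}
    (f : Fin n → Fin n' → Fin n → Fin n' → Fin p → Fin p' → ℝ) :
    ∑ i, ∑ j, ∑ k, ∑ l, ∑ s, ∑ q, f i j k l s q
      = ∑ s, ∑ q, ∑ i, ∑ j, ∑ k, ∑ l, f i j k l s q := by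
  conv_lhs => enter [2, i, 2, j, 2, k]; rw [Finset.sum_comm]
  conv_lhs => enter [2, i, 2, j]; rw [Finset.sum_comm]
  conv_lhs => enter [2, i]; rw [Finset.sum_comm]
  rw [Finset.sum_comm]
  conv_lhs => enter [2, s, 2, i, 2, j, 2, k]; rw [Finset.sum_comm]
  conv_lhs => enter [2, s, 2, i, 2, j]; rw [Finset.sum_comm]
  conv_lhs => enter [2, s, 2, i]; rw [Finset.sum_comm]
  conv_lhs => enter [2, s]; rw [Finset.sum_comm]

private lemma sum_prod4 {n p n' p' : ℕ}
    (X : Matrix (Fin n) (Fin p) ℝ) (X' : Matrix (Fin n') (Fin p') ℝ)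
    (δ : Matrix (Fin n) (Fin n') ℝ) :
    ∑ i, ∑ j, ∑ k, ∑ l,
        (∑ s, X i s * X k s) * (∑ s, X' j s * X' l s) * δ i j * δ k l
      = ∑ s, ∑ q, (∑ i, ∑ j, X i s * X' j q * δ i j) ^ 2 := by
  have hterm : ∀ i j k l : _,
      (∑ s, X i s * X k s) * (∑ s, X' j s * X' l s) * δ i j * δ k l
        = ∑ s, ∑ q, (X i s * X' j q * δ i j) * (X k s * X' l q * δ k l) := by
    intro i j k l
    rw [Finset.sum_mul_sum]
    simp only [Finset.sum_mul]
    refine Finset.sum_congr rfl fun s _ => Finset.sum_congr rfl fun q _ => by ring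
  simp_rw [hterm]
  rw [comm6]
  refine Finset.sum_congr rfl fun s _ => Finset.sum_congr rfl fun q _ => ?_
  rw [sq, Finset.sum_mul_sum]
  refine Finset.sum_congr rfl fun i _ => ?_
  simp_rw [Finset.sum_mul_sum]
  rw [Finset.sum_comm]

set_option maxHeartbeats 1000000 in
private lemma gw_quadratic_nonpos {n p n' p' : ℕ}
    (X : Matrix (Fin n) (Fin p) ℝ) (X' : Matrix (Fin n') (Fin p') ℝ)
    (C : Matrix (Fin n) (Fin n) ℝ) (C' : Matrix (Fin n') (Fin n') ℝ)
    (hC : ∀ i k, C i k = ∑ s, (X i s - X k s) ^ 2)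
    (hC' : ∀ j l, C' j l = ∑ s, (X' j s - X' l s) ^ 2)
    (δ : Matrix (Fin n) (Fin n') ℝ)
    (hrow : ∀ i, ∑ j, δ i j = 0) (hcol : ∀ j, ∑ i, δ i j = 0) :
    gwCost (fun a b => (a - b) ^ 2) C C' δ ≤ 0 := by
  have hCe : ∀ i k, C i k
      = (∑ s, X i s ^ 2) + (∑ s, X k s ^ 2) - 2 * ∑ s, X i s * X k s := by
    intro i k
    rw [hC i k, Finset.mul_sum, ← Finset.sum_add_distrib, ← Finset.sum_sub_distrib]
    exact Finset.sum_congr rfl fun s _ => by ring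
  have hC'e : ∀ j l, C' j l
      = (∑ s, X' j s ^ 2) + (∑ s, X' l s ^ 2) - 2 * ∑ s, X' j s * X' l s := by
    intro j l
    rw [hC' j l, Finset.mul_sum, ← Finset.sum_add_distrib, ← Finset.sum_sub_distrib]
    exact Finset.sum_congr rfl fun s _ => by ring
  have split : ∑ i, ∑ j, ∑ k, ∑ l, (C i k - C' j l) ^ 2 * δ i j * δ k l
      = (∑ i, ∑ j, ∑ k, ∑ l,
          ((C i k) ^ 2 - 2 * (∑ s, X i s ^ 2) * (∑ s, X' j s ^ 2)
            - 2 * (∑ s, X k s ^ 2) * (∑ s, X' j s ^ 2)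
            + 4 * (∑ s, X i s * X k s) * (∑ s, X' j s ^ 2)) * δ i j * δ k l)
        + (∑ i, ∑ j, ∑ k, ∑ l,
          (-(2 * (∑ s, X i s ^ 2) * (∑ s, X' l s ^ 2))
            + 4 * (∑ s, X i s ^ 2) * (∑ s, X' j s * X' l s)) * δ i j * δ k l)
        + (∑ i, ∑ j, ∑ k, ∑ l,
          (4 * (∑ s, X i s * X k s) * (∑ s, X' l s ^ 2)
            - 2 * (∑ s, X k s ^ 2) * (∑ s, X' l s ^ 2)) * δ i j * δ k l)
        + (∑ i, ∑ j, ∑ k, ∑ l,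
          ((C' j l) ^ 2 + 4 * (∑ s, X k s ^ 2) * (∑ s, X' j s * X' l s)) * δ i j * δ k l)
        - 8 * (∑ i, ∑ j, ∑ k, ∑ l,
          (∑ s, X i s * X k s) * (∑ s, X' j s * X' l s) * δ i j * δ k l) := by
    rw [const_mul_sum4]
    simp only [← Finset.sum_add_distrib, ← Finset.sum_sub_distrib]
    refine Finset.sum_congr rfl fun i _ => Finset.sum_congr rfl fun j _ =>
      Finset.sum_congr rfl fun k _ => Finset.sum_congr rfl fun l _ => ?_
    rw [hCe i k, hC'e j l]
    ring
  have hA : (∑ i, ∑ j, ∑ k, ∑ l,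
          ((C i k) ^ 2 - 2 * (∑ s, X i s ^ 2) * (∑ s, X' j s ^ 2)
            - 2 * (∑ s, X k s ^ 2) * (∑ s, X' j s ^ 2)
            + 4 * (∑ s, X i s * X k s) * (∑ s, X' j s ^ 2)) * δ i j * δ k l) = 0 :=
    z_noL δ hrow _
  have hB : (∑ i, ∑ j, ∑ k, ∑ l,
          (-(2 * (∑ s, X i s ^ 2) * (∑ s, X' l s ^ 2))
            + 4 * (∑ s, X i s ^ 2) * (∑ s, X' j s * X' l s)) * δ i j * δ k l) = 0 :=
    z_noK δ hcol _
  have hD : (∑ i, ∑ j, ∑ k, ∑ l,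
          (4 * (∑ s, X i s * X k s) * (∑ s, X' l s ^ 2)
            - 2 * (∑ s, X k s ^ 2) * (∑ s, X' l s ^ 2)) * δ i j * δ k l) = 0 :=
    z_noJ δ hrow _
  have hE : (∑ i, ∑ j, ∑ k, ∑ l,
          ((C' j l) ^ 2 + 4 * (∑ s, X k s ^ 2) * (∑ s, X' j s * X' l s)) * δ i j * δ k l) = 0 :=
    z_noI δ hcol _
  have key : ∑ i, ∑ j, ∑ k, ∑ l, (C i k - C' j l) ^ 2 * δ i j * δ k l
      = -8 * ∑ s, ∑ q, (∑ i, ∑ j, X i s * X' j q * δ i j) ^ 2 := by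
    rw [split, hA, hB, hD, hE, sum_prod4 X X' δ]
    ring
  have hnn : 0 ≤ ∑ s, ∑ q, (∑ i, ∑ j, X i s * X' j q * δ i j) ^ 2 := by positivity
  simp only [gwCost]
  rw [key]
  linarith

theorem gw_objective_concave {n p n' p' : ℕ}
    (X : Matrix (Fin n) (Fin p) ℝ) (X' : Matrix (Fin n') (Fin p') ℝ)
    (C : Matrix (Fin n) (Fin n) ℝ) (C' : Matrix (Fin n') (Fin n') ℝ)
    (hC : ∀ i k, C i k = ∑ s, (X i s - X k s) ^ 2)
    (hC' : ∀ j l, C' j l = ∑ s, (X' j s - X' l s) ^ 2)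
    (w : Fin n → ℝ) (w' : Fin n' → ℝ)
    (hw : IsProbVec w) (hw' : IsProbVec w')
    (π₀ π₁ : Matrix (Fin n) (Fin n') ℝ)
    (h₀ : π₀ ∈ TransportPolytope w w') (h₁ : π₁ ∈ TransportPolytope w w')
    (t : ℝ) (ht0 : 0 ≤ t) (ht1 : t ≤ 1) :
    t * gwCost (fun a b => (a - b) ^ 2) C C' π₀
        + (1 - t) * gwCost (fun a b => (a - b) ^ 2) C C' π₁
      ≤ gwCost (fun a b => (a - b) ^ 2) C C' (t • π₀ + (1 - t) • π₁) := by
  obtain ⟨_, h0r, h0c⟩ := h₀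
  obtain ⟨_, h1r, h1c⟩ := h₁
  have hrow : ∀ i, ∑ j, (π₀ - π₁) i j = 0 := fun i => by
    simp [Matrix.sub_apply, Finset.sum_sub_distrib, h0r i, h1r i]
  have hcol : ∀ j, ∑ i, (π₀ - π₁) i j = 0 := fun j => by
    simp [Matrix.sub_apply, Finset.sum_sub_distrib, h0c j, h1c j]
  have hneg : gwCost (fun a b => (a - b) ^ 2) C C' (π₀ - π₁) ≤ 0 :=
    gw_quadratic_nonpos X X' C C' hC hC' (π₀ - π₁) hrow hcol
  have hbil : gwCost (fun a b => (a - b) ^ 2) C C' (t • π₀ + (1 - t) • π₁)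
      = t * gwCost (fun a b => (a - b) ^ 2) C C' π₀
        + (1 - t) * gwCost (fun a b => (a - b) ^ 2) C C' π₁
        - (t * (1 - t)) * gwCost (fun a b => (a - b) ^ 2) C C' (π₀ - π₁) := by
    simp only [gwCost]
    rw [const_mul_sum4, const_mul_sum4, const_mul_sum4]
    simp only [Matrix.add_apply, Matrix.smul_apply, Matrix.sub_apply, smul_eq_mul,
      ← Finset.sum_add_distrib, ← Finset.sum_sub_distrib]
    refine Finset.sum_congr rfl fun i _ => Finset.sum_congr rfl fun j _ =>
      Finset.sum_congr rfl fun k _ => Finset.sum_congr rfl fun l _ => ?_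
    ring
  rw [hbil]
  have hmul : 0 ≤ t * (1 - t) := mul_nonneg ht0 (by linarith)
  nlinarith [mul_nonpos_of_nonneg_of_nonpos hmul hneg]
end

section
/- Let X ∈ ℝ^{n×p} and X' ∈ ℝ^{n'×p'} be matrices with rows x_i and x'_j respectively, let x ∈ ℝ^n be the vector with x_i-th entry ‖x_i‖² and x' ∈ ℝ^{n'} the vector with entries ‖x'_j‖², let C ∈ ℝ^{n×n} be the squared Euclidean distance matrix of X and C' ∈ ℝ^{n'×n'} the squared Euclidean distance matrix of X', and let w ∈ ℝ^n, w' ∈ ℝ^{n'} be probability vectors. Then for every π ∈ Π(w,w'), ∑_{i,j,k,l} (C_{i,k} − C'_{j,l})² π_{i,j} π_{k,l} = Cte − 4⟨M, π⟩ − 8 tr(πᵀ XXᵀ π X'X'ᵀ), where M = x x'ᵀ − 2 x w'ᵀ X'X'ᵀ − 2 XXᵀ w x'ᵀ ∈ ℝ^{n×n'}, ⟨M,π⟩ = ∑_{i,j} M_{i,j} π_{i,j}, and Cte = ∑_{i,k} ‖x_i − x_k‖⁴ w_i w_k + ∑_{j,l} ‖x'_j − x'_l‖⁴ w'_j w'_l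 − 4 (wᵀx)(w'ᵀx'). -/
open Finset Matrix

section helpers
variable {α β γ δ : Type*} [Fintype α] [Fintype β] [Fintype γ] [Fintype δ]

lemma my_sum_swap12 (f : α → β → γ → δ → ℝ) :
    ∑ a, ∑ b, ∑ c, ∑ d, f a b c d = ∑ b, ∑ a, ∑ c, ∑ d, f a b c d :=
  Finset.sum_comm

lemma my_sum_swap23 (f : α → β → γ → δ → ℝ) :
    ∑ a, ∑ b, ∑ c, ∑ d, f a b c d = ∑ a, ∑ c, ∑ b, ∑ d, f a b c d :=
  Finset.sum_congr rfl fun _ _ => Finset.sum_comm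

lemma my_sum_swap34 (f : α → β → γ → δ → ℝ) :
    ∑ a, ∑ b, ∑ c, ∑ d, f a b c d = ∑ a, ∑ b, ∑ d, ∑ c, f a b c d :=
  Finset.sum_congr rfl fun _ _ => Finset.sum_congr rfl fun _ _ => Finset.sum_comm

lemma my_sum4_block (f : α → β → γ → δ → ℝ) :
    ∑ a, ∑ b, ∑ c, ∑ d, f a b c d = ∑ c, ∑ d, ∑ a, ∑ b, f a b c d := by
  have h : ∑ p : α × β, ∑ q : γ × δ, f p.1 p.2 q.1 q.2
      = ∑ q : γ × δ, ∑ p : α × β, f p.1 p.2 q.1 q.2 := Finset.sum_comm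
  simpa [Fintype.sum_prod_type] using h

end helpers

theorem gw_objective_explicit_form {n p n' p' : ℕ}
    (X : Matrix (Fin n) (Fin p) ℝ) (X' : Matrix (Fin n') (Fin p') ℝ)
    (C : Matrix (Fin n) (Fin n) ℝ) (C' : Matrix (Fin n') (Fin n') ℝ)
    (hC : ∀ i k, C i k = ∑ s, (X i s - X k s) ^ 2)
    (hC' : ∀ j l, C' j l = ∑ s, (X' j s - X' l s) ^ 2)
    (x : Fin n → ℝ) (x' : Fin n' → ℝ)
    (hx : ∀ i, x i = ∑ s, X i s ^ 2) (hx' : ∀ j, x' j = ∑ s, X' j s ^ 2)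
    (w : Fin n → ℝ) (w' : Fin n' → ℝ)
    (hw : IsProbVec w) (hw' : IsProbVec w')
    (M : Matrix (Fin n) (Fin n') ℝ)
    (hM : ∀ i j, M i j =
      x i * x' j
        - 2 * x i * (∑ l, w' l * (X' * X'.transpose) l j)
        - 2 * (∑ k, (X * X.transpose) i k * w k) * x' j)
    (π : Matrix (Fin n) (Fin n') ℝ) (hπ : π ∈ TransportPolytope w w') :
    gwCost (fun a b => (a - b) ^ 2) C C' π
      = ((∑ i, ∑ k, C i k ^ 2 * w i * w k)
          + (∑ j, ∑ l, C' j l ^ 2 * w' j * w' l)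
          - 4 * (∑ i, w i * x i) * (∑ j, w' j * x' j))
        - 4 * (∑ i, ∑ j, M i j * π i j)
        - 8 * Matrix.trace (π.transpose * (X * X.transpose) * π
            * (X' * X'.transpose)) := by
  obtain ⟨hpos, h1, h2⟩ := hπ
  simp only [gwCost]
  set A := X * X.transpose with hAdef
  set B := X' * X'.transpose with hBdef
  have hAe : ∀ i k, A i k = ∑ s, X i s * X k s := by
    intro i k; simp [hAdef, Matrix.mul_apply, Matrix.transpose_apply]
  have hBe : ∀ j l, B j l = ∑ s, X' j s * X' l s := by
    intro j l; simp [hBdef, Matrix.mul_apply, Matrix.transpose_apply]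
  have hAs : ∀ i k, A i k = A k i := by
    intro i k; rw [hAe, hAe]; exact Finset.sum_congr rfl fun s _ => mul_comm _ _
  have hBs : ∀ j l, B j l = B l j := by
    intro j l; rw [hBe, hBe]; exact Finset.sum_congr rfl fun s _ => mul_comm _ _
  have hCd : ∀ i k, C i k = x i + x k - 2 * A i k := by
    intro i k
    rw [hC, hx, hx, hAe, ← Finset.sum_add_distrib, Finset.mul_sum,
      ← Finset.sum_sub_distrib]
    exact Finset.sum_congr rfl fun s _ => by ring
  have hC'd : ∀ j l, C' j l = x' j + x' l - 2 * B j l := by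
    intro j l
    rw [hC', hx', hx', hBe, ← Finset.sum_add_distrib, Finset.mul_sum,
      ← Finset.sum_sub_distrib]
    exact Finset.sum_congr rfl fun s _ => by ring
  have htot : ∑ i, ∑ j, π i j = 1 := by simp only [h1]; exact hw.2
  -- basic sum evaluators
  have rowsum : ∀ (c : Fin n → ℝ), (∑ k, ∑ l, c k * π k l) = ∑ k, c k * w k :=
    fun c => Finset.sum_congr rfl fun k _ => by rw [← Finset.mul_sum, h1]
  have colsum : ∀ (c : Fin n' → ℝ), (∑ k, ∑ l, c l * π k l) = ∑ l, c l * w' l := by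
    intro c
    rw [Finset.sum_comm]
    exact Finset.sum_congr rfl fun l _ => by rw [← Finset.mul_sum, h2]
  have constsum : ∀ c : ℝ, (∑ k, ∑ l, c * π k l) = c := by
    intro c
    simp only [← Finset.mul_sum]
    rw [htot, mul_one]
  have pair_ik : ∀ (c : ℝ) (i k : Fin n), ∑ j, ∑ l, c * π i j * π k l = c * w i * w k := by
    intro c i k
    calc ∑ j, ∑ l, c * π i j * π k l
        = ∑ j, c * π i j * w k :=
          Finset.sum_congr rfl fun j _ => by rw [← Finset.mul_sum, h1 k]
      _ = ∑ j, (c * w k) * π i j := Finset.sum_congr rfl fun j _ => by ring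
      _ = (c * w k) * w i := by rw [← Finset.mul_sum, h1 i]
      _ = c * w i * w k := by ring
  have pair_jl : ∀ (c : ℝ) (j l : Fin n'), ∑ i, ∑ k, c * π i j * π k l = c * w' j * w' l := by
    intro c j l
    calc ∑ i, ∑ k, c * π i j * π k l
        = ∑ i, c * π i j * w' l :=
          Finset.sum_congr rfl fun i _ => by rw [← Finset.mul_sum, h2 l]
      _ = ∑ i, (c * w' l) * π i j := Finset.sum_congr rfl fun i _ => by ring
      _ = (c * w' l) * w' j := by rw [← Finset.mul_sum, h2 j]
      _ = c * w' j * w' l := by ring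
  -- separable quadruple sums
  have Qsep : ∀ (F G : Fin n → Fin n' → ℝ),
      (∑ i, ∑ j, ∑ k, ∑ l, (F i j * G k l) * π i j * π k l)
        = (∑ i, ∑ j, F i j * π i j) * (∑ k, ∑ l, G k l * π k l) := by
    intro F G
    rw [my_sum_swap23 (fun i j k l => (F i j * G k l) * π i j * π k l)]
    rw [Finset.sum_mul_sum]
    refine Finset.sum_congr rfl fun i _ => ?_
    refine Finset.sum_congr rfl fun k _ => ?_
    rw [Finset.sum_mul_sum]
    exact Finset.sum_congr rfl fun j _ => Finset.sum_congr rfl fun l _ => by ring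
  -- monomial evaluations
  have m1 : (∑ i, ∑ j, ∑ k, ∑ l, (x i * x' j) * π i j * π k l)
      = ∑ i, ∑ j, x i * x' j * π i j :=
    Finset.sum_congr rfl fun i _ => Finset.sum_congr rfl fun j _ => constsum _
  have m2 : (∑ i, ∑ j, ∑ k, ∑ l, (x i * x' l) * π i j * π k l)
      = (∑ i, x i * w i) * (∑ l, x' l * w' l) := by
    have h := Qsep (fun i _ => x i) (fun _ l => x' l)
    rw [show (∑ i, ∑ j, ∑ k, ∑ l, (x i * x' l) * π i j * π k l)
        = (∑ i, ∑ j, x i * π i j) * (∑ k, ∑ l, x' l * π k l) from h,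
      rowsum x, colsum x']
  have m5 : (∑ i, ∑ j, ∑ k, ∑ l, (x i * B l j) * π i j * π k l)
      = ∑ i, ∑ j, x i * (∑ l, w' l * B l j) * π i j := by
    refine Finset.sum_congr rfl fun i _ => Finset.sum_congr rfl fun j _ => ?_
    calc ∑ k, ∑ l, (x i * B l j) * π i j * π k l
        = ∑ l, (x i * B l j) * π i j * w' l := colsum _
      _ = ∑ l, (x i * π i j) * (w' l * B l j) :=
          Finset.sum_congr rfl fun l _ => by ring
      _ = (x i * π i j) * ∑ l, w' l * B l j := by rw [← Finset.mul_sum]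
      _ = x i * (∑ l, w' l * B l j) * π i j := by ring
  have m7 : (∑ i, ∑ j, ∑ k, ∑ l, (A i k * x' j) * π i j * π k l)
      = ∑ i, ∑ j, (∑ k, A i k * w k) * x' j * π i j := by
    refine Finset.sum_congr rfl fun i _ => Finset.sum_congr rfl fun j _ => ?_
    calc ∑ k, ∑ l, (A i k * x' j) * π i j * π k l
        = ∑ k, (A i k * x' j) * π i j * w k := rowsum _
      _ = ∑ k, (x' j * π i j) * (A i k * w k) :=
          Finset.sum_congr rfl fun k _ => by ring
      _ = (x' j * π i j) * ∑ k, A i k * w k := by rw [← Finset.mul_sum]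
      _ = (∑ k, A i k * w k) * x' j * π i j := by ring
  -- squared-distance terms
  have mC : (∑ i, ∑ j, ∑ k, ∑ l, C i k ^ 2 * π i j * π k l)
      = ∑ i, ∑ k, C i k ^ 2 * w i * w k := by
    rw [my_sum_swap23 (fun i j k l => C i k ^ 2 * π i j * π k l)]
    exact Finset.sum_congr rfl fun i _ => Finset.sum_congr rfl fun k _ => pair_ik _ i k
  have mC' : (∑ i, ∑ j, ∑ k, ∑ l, C' j l ^ 2 * π i j * π k l)
      = ∑ j, ∑ l, C' j l ^ 2 * w' j * w' l := by
    rw [my_sum_swap23 (fun i j k l => C' j l ^ 2 * π i j * π k l),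
      my_sum4_block (fun i k j l => C' j l ^ 2 * π i j * π k l)]
    exact Finset.sum_congr rfl fun j _ => Finset.sum_congr rfl fun l _ => pair_jl _ j l
  -- trace term
  have htr : Matrix.trace (π.transpose * A * π * B)
      = ∑ j, ∑ l, ∑ k, ∑ i, π i j * A i k * π k l * B l j := by
    simp only [Matrix.trace, Matrix.diag, Matrix.mul_apply, Matrix.transpose_apply,
      Finset.sum_mul]
  have m9 : (∑ i, ∑ j, ∑ k, ∑ l, (A i k * B l j) * π i j * π k l)
      = Matrix.trace (π.transpose * A * π * B) := by
    rw [htr,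
      my_sum_swap23 (fun i j k l => (A i k * B l j) * π i j * π k l),
      my_sum4_block (fun i k j l => (A i k * B l j) * π i j * π k l),
      my_sum_swap34 (fun j l i k => (A i k * B l j) * π i j * π k l)]
    exact Finset.sum_congr rfl fun j _ => Finset.sum_congr rfl fun l _ =>
      Finset.sum_congr rfl fun k _ => Finset.sum_congr rfl fun i _ => by ring
  -- antisymmetric remainder
  set g : Fin n → Fin n' → Fin n → Fin n' → ℝ := fun i j k l =>
    (2 * (x i * x' j - x k * x' l) + 2 * (x i * x' l - x k * x' j)
      - 4 * B l j * (x i - x k) - 4 * A i k * (x' j - x' l)) * (π i j * π k l)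
    with hgdef
  have hneg : ∀ i j k l, g i j k l = - g k l i j := by
    intro i j k l
    simp only [hgdef]
    rw [hAs k i, hBs j l]
    ring
  have hg0 : (∑ i, ∑ j, ∑ k, ∑ l, g i j k l) = 0 := by
    have hb : (∑ i, ∑ j, ∑ k, ∑ l, g i j k l)
        = - (∑ i, ∑ j, ∑ k, ∑ l, g i j k l) := by
      calc (∑ i, ∑ j, ∑ k, ∑ l, g i j k l)
          = ∑ k, ∑ l, ∑ i, ∑ j, g i j k l := my_sum4_block g
        _ = ∑ k, ∑ l, ∑ i, ∑ j, - g k l i j :=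
            Finset.sum_congr rfl fun k _ => Finset.sum_congr rfl fun l _ =>
              Finset.sum_congr rfl fun i _ => Finset.sum_congr rfl fun j _ => hneg i j k l
        _ = - (∑ k, ∑ l, ∑ i, ∑ j, g k l i j) := by
            simp only [Finset.sum_neg_distrib]
        _ = - (∑ i, ∑ j, ∑ k, ∑ l, g i j k l) := rfl
    linarith
  -- pointwise expansion
  have expand : ∀ i j k l, (C i k - C' j l) ^ 2 * π i j * π k l =
      C i k ^ 2 * π i j * π k l + C' j l ^ 2 * π i j * π k l
      - 4 * ((x i * x' l) * π i j * π k l)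
      - 4 * ((x i * x' j) * π i j * π k l)
      + 8 * ((x i * B l j) * π i j * π k l)
      + 8 * ((A i k * x' j) * π i j * π k l)
      - 8 * ((A i k * B l j) * π i j * π k l)
      + g i j k l := by
    intro i j k l
    simp only [hgdef]
    rw [hCd i k, hC'd j l, hBs j l]
    ring
  have hMsum : (∑ i, ∑ j, M i j * π i j)
      = (∑ i, ∑ j, x i * x' j * π i j)
        - 2 * (∑ i, ∑ j, x i * (∑ l, w' l * B l j) * π i j)
        - 2 * (∑ i, ∑ j, (∑ k, A i k * w k) * x' j * π i j) := by
    calc (∑ i, ∑ j, M i j * π i j)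
        = ∑ i, ∑ j, (x i * x' j * π i j
            - 2 * (x i * (∑ l, w' l * B l j) * π i j)
            - 2 * ((∑ k, A i k * w k) * x' j * π i j)) :=
          Finset.sum_congr rfl fun i _ => Finset.sum_congr rfl fun j _ => by
            rw [hM]; ring
      _ = _ := by
          simp only [Finset.sum_sub_distrib, ← Finset.mul_sum]
  -- assemble
  calc (∑ i, ∑ j, ∑ k, ∑ l, (C i k - C' j l) ^ 2 * π i j * π k l)
      = ∑ i, ∑ j, ∑ k, ∑ l, (C i k ^ 2 * π i j * π k l + C' j l ^ 2 * π i j * π k l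
        - 4 * ((x i * x' l) * π i j * π k l)
        - 4 * ((x i * x' j) * π i j * π k l)
        + 8 * ((x i * B l j) * π i j * π k l)
        + 8 * ((A i k * x' j) * π i j * π k l)
        - 8 * ((A i k * B l j) * π i j * π k l)
        + g i j k l) :=
        Finset.sum_congr rfl fun i _ => Finset.sum_congr rfl fun j _ =>
          Finset.sum_congr rfl fun k _ => Finset.sum_congr rfl fun l _ => expand i j k l
    _ = (∑ i, ∑ j, ∑ k, ∑ l, C i k ^ 2 * π i j * π k l)
        + (∑ i, ∑ j, ∑ k, ∑ l, C' j l ^ 2 * π i j * π k l)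
        - 4 * (∑ i, ∑ j, ∑ k, ∑ l, (x i * x' l) * π i j * π k l)
        - 4 * (∑ i, ∑ j, ∑ k, ∑ l, (x i * x' j) * π i j * π k l)
        + 8 * (∑ i, ∑ j, ∑ k, ∑ l, (x i * B l j) * π i j * π k l)
        + 8 * (∑ i, ∑ j, ∑ k, ∑ l, (A i k * x' j) * π i j * π k l)
        - 8 * (∑ i, ∑ j, ∑ k, ∑ l, (A i k * B l j) * π i j * π k l)
        + (∑ i, ∑ j, ∑ k, ∑ l, g i j k l) := by
        simp only [Finset.sum_add_distrib, Finset.sum_sub_distrib, ← Finset.mul_sum]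
    _ = _ := by
        rw [mC, mC', m1, m2, m5, m7, m9, hg0, hMsum]
        have e1 : (∑ i, w i * x i) = ∑ i, x i * w i :=
          Finset.sum_congr rfl fun i _ => mul_comm _ _
        have e2 : (∑ j, w' j * x' j) = ∑ j, x' j * w' j :=
          Finset.sum_congr rfl fun j _ => mul_comm _ _
        rw [e1, e2]
        ring
end

section
/- Let X ∈ ℝ^{n×p} and X' ∈ ℝ^{n'×p'} be matrices, let C ∈ ℝ^{n×n} be the squared Euclidean distance matrix of X and C' ∈ ℝ^{n'×n'} the squared Euclidean distance matrix of X', let L(a,b) = (a−b)², and let w ∈ ℝ^n, w' ∈ ℝ^{n'} be probability vectors. Then COOT(C, C', w, w', w, w') = GW(C, C', w, w'). -/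
open Finset Matrix

private lemma sum4_swap {α β γ η : Type*} [Fintype α] [Fintype β] [Fintype γ] [Fintype η]
    (t : α → β → γ → η → ℝ) :
    ∑ i, ∑ j, ∑ k, ∑ l, t i j k l = ∑ k, ∑ l, ∑ i, ∑ j, t i j k l :=
  calc ∑ i, ∑ j, ∑ k, ∑ l, t i j k l
      = ∑ i, ∑ k, ∑ j, ∑ l, t i j k l :=
        Finset.sum_congr rfl fun i _ => Finset.sum_comm
    _ = ∑ k, ∑ i, ∑ j, ∑ l, t i j k l := Finset.sum_comm
    _ = ∑ k, ∑ i, ∑ l, ∑ j, t i j k l :=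
        Finset.sum_congr rfl fun k _ => Finset.sum_congr rfl fun i _ => Finset.sum_comm
    _ = ∑ k, ∑ l, ∑ i, ∑ j, t i j k l :=
        Finset.sum_congr rfl fun k _ => Finset.sum_comm

private lemma sum4_congr {α β γ η : Type*} [Fintype α] [Fintype β] [Fintype γ] [Fintype η]
    {f g : α → β → γ → η → ℝ} (h : ∀ i j k l, f i j k l = g i j k l) :
    ∑ i, ∑ j, ∑ k, ∑ l, f i j k l = ∑ i, ∑ j, ∑ k, ∑ l, g i j k l :=
  Finset.sum_congr rfl fun i _ => Finset.sum_congr rfl fun j _ =>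
    Finset.sum_congr rfl fun k _ => Finset.sum_congr rfl fun l _ => h i j k l

private def Phi {n n' : ℕ} (δ : Matrix (Fin n) (Fin n') ℝ) (g : Fin n → Fin n → ℝ)
    (h : Fin n' → Fin n' → ℝ) : ℝ :=
  ∑ i, ∑ j, ∑ k, ∑ l, g i k * h j l * δ i j * δ k l

variable {n n' : ℕ} (δ : Matrix (Fin n) (Fin n') ℝ)

private lemma Phi_fst (hcol : ∀ j, ∑ i, δ i j = 0) (u : Fin n → ℝ) (h : Fin n' → Fin n' → ℝ) :
    Phi δ (fun i _ => u i) h = 0 := by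
  simp only [Phi]
  refine Finset.sum_eq_zero fun i _ => Finset.sum_eq_zero fun j _ => ?_
  rw [Finset.sum_comm]
  refine Finset.sum_eq_zero fun l _ => ?_
  rw [← Finset.mul_sum, hcol, mul_zero]

private lemma Phi_snd (hcol : ∀ j, ∑ i, δ i j = 0) (u : Fin n → ℝ) (h : Fin n' → Fin n' → ℝ) :
    Phi δ (fun _ k => u k) h = 0 := by
  simp only [Phi]
  rw [sum4_swap]
  refine Finset.sum_eq_zero fun k _ => Finset.sum_eq_zero fun l _ => ?_
  rw [Finset.sum_comm]
  refine Finset.sum_eq_zero fun j _ => ?_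
  have e : ∑ i, u k * h j l * δ i j * δ k l = (u k * h j l * δ k l) * ∑ i, δ i j := by
    rw [Finset.mul_sum]; exact Finset.sum_congr rfl fun i _ => by ring
  rw [e, hcol, mul_zero]

private lemma Phi_fst' (hrow : ∀ i, ∑ j, δ i j = 0) (g : Fin n → Fin n → ℝ) (v : Fin n' → ℝ) :
    Phi δ g (fun j _ => v j) = 0 := by
  simp only [Phi]
  refine Finset.sum_eq_zero fun i _ => Finset.sum_eq_zero fun j _ =>
    Finset.sum_eq_zero fun k _ => ?_
  rw [← Finset.mul_sum, hrow, mul_zero]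

private lemma Phi_snd' (hrow : ∀ i, ∑ j, δ i j = 0) (g : Fin n → Fin n → ℝ) (v : Fin n' → ℝ) :
    Phi δ g (fun _ l => v l) = 0 := by
  simp only [Phi]
  refine Finset.sum_eq_zero fun i _ => ?_
  rw [Finset.sum_comm]
  refine Finset.sum_eq_zero fun k _ => ?_
  rw [Finset.sum_comm]
  refine Finset.sum_eq_zero fun l _ => ?_
  have e : ∑ j, g i k * v l * δ i j * δ k l = (g i k * v l * δ k l) * ∑ j, δ i j := by
    rw [Finset.mul_sum]; exact Finset.sum_congr rfl fun j _ => by ring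
  rw [e, hrow, mul_zero]

private lemma Phi_factor {p p' : ℕ} (X : Matrix (Fin n) (Fin p) ℝ) (X' : Matrix (Fin n') (Fin p') ℝ) :
    Phi δ (fun i k => ∑ s, X i s * X k s) (fun j l => ∑ t, X' j t * X' l t)
      = ∑ s, ∑ t, (∑ i, ∑ j, X i s * X' j t * δ i j) ^ 2 := by
  simp only [Phi]
  calc ∑ i, ∑ j, ∑ k, ∑ l, (∑ s, X i s * X k s) * (∑ t, X' j t * X' l t) * δ i j * δ k l
      = ∑ i, ∑ j, ∑ k, ∑ l, ∑ s, ∑ t,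
          (X i s * X' j t * δ i j) * (X k s * X' l t * δ k l) := by
        refine sum4_congr fun i j k l => ?_
        rw [Finset.sum_mul_sum]
        simp only [Finset.sum_mul]
        exact Finset.sum_congr rfl fun s _ => Finset.sum_congr rfl fun t _ => by ring
    _ = ∑ i, ∑ j, ∑ s, ∑ t, ∑ k, ∑ l,
          (X i s * X' j t * δ i j) * (X k s * X' l t * δ k l) :=
        Finset.sum_congr rfl fun i _ => Finset.sum_congr rfl fun j _ => sum4_swap _
    _ = ∑ s, ∑ t, ∑ i, ∑ j, ∑ k, ∑ l,
          (X i s * X' j t * δ i j) * (X k s * X' l t * δ k l) := sum4_swap _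
    _ = ∑ s, ∑ t, (∑ i, ∑ j, X i s * X' j t * δ i j) ^ 2 := by
        refine Finset.sum_congr rfl fun s _ => Finset.sum_congr rfl fun t _ => ?_
        rw [sq]
        simp only [Finset.sum_mul_sum]
        exact Finset.sum_congr rfl fun i _ => Finset.sum_comm

private lemma mul_sum4 {α β γ η : Type*} [Fintype α] [Fintype β] [Fintype γ] [Fintype η]
    (c : ℝ) (t : α → β → γ → η → ℝ) :
    c * (∑ i, ∑ j, ∑ k, ∑ l, t i j k l) = ∑ i, ∑ j, ∑ k, ∑ l, c * t i j k l := by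
  simp only [Finset.mul_sum]

private lemma core {n p n' p' : ℕ}
    (X : Matrix (Fin n) (Fin p) ℝ) (X' : Matrix (Fin n') (Fin p') ℝ)
    (C : Matrix (Fin n) (Fin n) ℝ) (C' : Matrix (Fin n') (Fin n') ℝ)
    (hC : ∀ i k, C i k = ∑ s, (X i s - X k s) ^ 2)
    (hC' : ∀ j l, C' j l = ∑ s, (X' j s - X' l s) ^ 2)
    (δ : Matrix (Fin n) (Fin n') ℝ)
    (hrow : ∀ i, ∑ j, δ i j = 0) (hcol : ∀ j, ∑ i, δ i j = 0) :
    ∑ i, ∑ j, ∑ k, ∑ l, (C i k - C' j l) ^ 2 * δ i j * δ k l ≤ 0 := by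
  have hC2 : ∀ i k, C i k
      = (∑ s, (X i s) ^ 2) + (∑ s, (X k s) ^ 2) - 2 * (∑ s, X i s * X k s) := by
    intro i k
    rw [hC i k, Finset.mul_sum, ← Finset.sum_add_distrib, ← Finset.sum_sub_distrib]
    exact Finset.sum_congr rfl fun s _ => by ring
  have hC'2 : ∀ j l, C' j l
      = (∑ t, (X' j t) ^ 2) + (∑ t, (X' l t) ^ 2) - 2 * (∑ t, X' j t * X' l t) := by
    intro j l
    rw [hC' j l, Finset.mul_sum, ← Finset.sum_add_distrib, ← Finset.sum_sub_distrib]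
    exact Finset.sum_congr rfl fun t _ => by ring
  -- split the quadratic form
  have hsplit : ∑ i, ∑ j, ∑ k, ∑ l, (C i k - C' j l) ^ 2 * δ i j * δ k l
      = Phi δ (fun i k => (C i k) ^ 2) (fun _ _ => 1)
        + Phi δ (fun _ _ => 1) (fun j l => (C' j l) ^ 2)
        - 2 * Phi δ (fun i k => C i k) (fun j l => C' j l) := by
    simp only [Phi]
    rw [mul_sum4]
    simp only [← Finset.sum_add_distrib, ← Finset.sum_sub_distrib]
    exact sum4_congr fun i j k l => by ring
  have z1 : Phi δ (fun i k => (C i k) ^ 2) (fun _ _ => (1:ℝ)) = 0 :=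
    Phi_snd' δ hrow _ (fun _ => 1)
  have z2 : Phi δ (fun _ _ => (1:ℝ)) (fun j l => (C' j l) ^ 2) = 0 :=
    Phi_fst δ hcol (fun _ => 1) _
  -- decompose the cross term
  have d1 : Phi δ (fun i k => C i k) (fun j l => C' j l)
      = Phi δ (fun i _ => ∑ s, (X i s) ^ 2) (fun j l => C' j l)
        + Phi δ (fun _ k => ∑ s, (X k s) ^ 2) (fun j l => C' j l)
        + (-2) * Phi δ (fun i k => ∑ s, X i s * X k s) (fun j l => C' j l) := by
    simp only [Phi]
    rw [mul_sum4]
    simp only [← Finset.sum_add_distrib]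
    exact sum4_congr fun i j k l => by rw [hC2 i k]; ring
  have d2 : Phi δ (fun i k => ∑ s, X i s * X k s) (fun j l => C' j l)
      = Phi δ (fun i k => ∑ s, X i s * X k s) (fun j _ => ∑ t, (X' j t) ^ 2)
        + Phi δ (fun i k => ∑ s, X i s * X k s) (fun _ l => ∑ t, (X' l t) ^ 2)
        + (-2) * Phi δ (fun i k => ∑ s, X i s * X k s) (fun j l => ∑ t, X' j t * X' l t) := by
    simp only [Phi]
    rw [mul_sum4]
    simp only [← Finset.sum_add_distrib]
    exact sum4_congr fun i j k l => by rw [hC'2 j l]; ring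
  have z3 : Phi δ (fun i _ => ∑ s, (X i s) ^ 2) (fun j l => C' j l) = 0 :=
    Phi_fst δ hcol _ _
  have z4 : Phi δ (fun _ k => ∑ s, (X k s) ^ 2) (fun j l => C' j l) = 0 :=
    Phi_snd δ hcol _ _
  have z5 : Phi δ (fun i k => ∑ s, X i s * X k s) (fun j _ => ∑ t, (X' j t) ^ 2) = 0 :=
    Phi_fst' δ hrow _ _
  have z6 : Phi δ (fun i k => ∑ s, X i s * X k s) (fun _ l => ∑ t, (X' l t) ^ 2) = 0 :=
    Phi_snd' δ hrow _ _
  have hfac := Phi_factor δ X X'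
  have hnn : 0 ≤ ∑ s, ∑ t, (∑ i, ∑ j, X i s * X' j t * δ i j) ^ 2 :=
    Finset.sum_nonneg fun s _ => Finset.sum_nonneg fun t _ => sq_nonneg _
  rw [hsplit, z1, z2, d1, z3, z4, d2, z5, z6, hfac]
  linarith

private lemma gw_add_le {n p n' p' : ℕ}
    (X : Matrix (Fin n) (Fin p) ℝ) (X' : Matrix (Fin n') (Fin p') ℝ)
    (C : Matrix (Fin n) (Fin n) ℝ) (C' : Matrix (Fin n') (Fin n') ℝ)
    (hC : ∀ i k, C i k = ∑ s, (X i s - X k s) ^ 2)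
    (hC' : ∀ j l, C' j l = ∑ s, (X' j s - X' l s) ^ 2)
    (w : Fin n → ℝ) (w' : Fin n' → ℝ)
    (πs πv : Matrix (Fin n) (Fin n') ℝ)
    (hπs : πs ∈ TransportPolytope w w') (hπv : πv ∈ TransportPolytope w w') :
    gwCost (fun a b => (a - b) ^ 2) C C' πs + gwCost (fun a b => (a - b) ^ 2) C C' πv
      ≤ 2 * cootCost (fun a b => (a - b) ^ 2) C C' πs πv := by
  obtain ⟨hs0, hs1, hs2⟩ := hπs
  obtain ⟨hv0, hv1, hv2⟩ := hπv
  have hrow : ∀ i, ∑ j, (πs i j - πv i j) = 0 := fun i => by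
    rw [Finset.sum_sub_distrib, hs1, hv1, sub_self]
  have hcol : ∀ j, ∑ i, (πs i j - πv i j) = 0 := fun j => by
    rw [Finset.sum_sub_distrib, hs2, hv2, sub_self]
  have hS : ∑ i, ∑ j, ∑ k, ∑ l,
      (C i k - C' j l) ^ 2 * (πs i j - πv i j) * (πs k l - πv k l) ≤ 0 := by
    simpa using core X X' C C' hC hC' (fun i j => πs i j - πv i j) hrow hcol
  have Csym : ∀ i k, C i k = C k i := fun i k => by
    rw [hC, hC]; exact Finset.sum_congr rfl fun s _ => by ring
  have C'sym : ∀ j l, C' j l = C' l j := fun j l => by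
    rw [hC', hC']; exact Finset.sum_congr rfl fun s _ => by ring
  have hsym : cootCost (fun a b => (a - b) ^ 2) C C' πv πs
      = cootCost (fun a b => (a - b) ^ 2) C C' πs πv := by
    simp only [cootCost]
    rw [sum4_swap]
    refine Finset.sum_congr rfl fun i _ => Finset.sum_congr rfl fun j _ =>
      Finset.sum_congr rfl fun k _ => Finset.sum_congr rfl fun l _ => ?_
    rw [Csym k i, C'sym l j]; ring
  have hdecomp : ∑ i, ∑ j, ∑ k, ∑ l,
      (C i k - C' j l) ^ 2 * (πs i j - πv i j) * (πs k l - πv k l)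
      = cootCost (fun a b => (a - b) ^ 2) C C' πs πs
        + cootCost (fun a b => (a - b) ^ 2) C C' πv πv
        - cootCost (fun a b => (a - b) ^ 2) C C' πs πv
        - cootCost (fun a b => (a - b) ^ 2) C C' πv πs := by
    simp only [cootCost, ← Finset.sum_add_distrib, ← Finset.sum_sub_distrib]
    exact sum4_congr fun i j k l => by ring
  have e1 : gwCost (fun a b => (a - b) ^ 2) C C' πs
      = cootCost (fun a b => (a - b) ^ 2) C C' πs πs := rfl
  have e2 : gwCost (fun a b => (a - b) ^ 2) C C' πv
      = cootCost (fun a b => (a - b) ^ 2) C C' πv πv := rfl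
  rw [e1, e2]
  rw [hdecomp, hsym] at hS
  linarith

theorem coot_eq_gw_of_sq_euclidean {n p n' p' : ℕ}
    (X : Matrix (Fin n) (Fin p) ℝ) (X' : Matrix (Fin n') (Fin p') ℝ)
    (C : Matrix (Fin n) (Fin n) ℝ) (C' : Matrix (Fin n') (Fin n') ℝ)
    (hC : ∀ i k, C i k = ∑ s, (X i s - X k s) ^ 2)
    (hC' : ∀ j l, C' j l = ∑ s, (X' j s - X' l s) ^ 2)
    (w : Fin n → ℝ) (w' : Fin n' → ℝ)
    (hw : IsProbVec w) (hw' : IsProbVec w') :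
    COOT (fun a b => (a - b) ^ 2) C C' w w' w w'
      = GW (fun a b => (a - b) ^ 2) C C' w w' := by
  have hprod : (fun i j => w i * w' j) ∈ TransportPolytope w w' := by
    refine ⟨fun i j => mul_nonneg (hw.1 i) (hw'.1 j), fun i => ?_, fun j => ?_⟩
    · rw [← Finset.mul_sum, hw'.2, mul_one]
    · rw [← Finset.sum_mul, hw.2, one_mul]
  have hcnn : ∀ πs πv : Matrix (Fin n) (Fin n') ℝ, (∀ i j, 0 ≤ πs i j) → (∀ i j, 0 ≤ πv i j) →
      (0:ℝ) ≤ cootCost (fun a b => (a - b) ^ 2) C C' πs πv := by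
    intro πs πv hs hv
    refine Finset.sum_nonneg fun i _ => Finset.sum_nonneg fun j _ =>
      Finset.sum_nonneg fun k _ => Finset.sum_nonneg fun l _ => ?_
    exact mul_nonneg (mul_nonneg (sq_nonneg _) (hs i j)) (hv k l)
  have hbdd_c : BddBelow {r | ∃ πs ∈ TransportPolytope w w', ∃ πv ∈ TransportPolytope w w',
      r = cootCost (fun a b => (a - b) ^ 2) C C' πs πv} := by
    refine ⟨0, fun r hr => ?_⟩
    obtain ⟨πs, hs, πv, hv, rfl⟩ := hr
    exact hcnn πs πv hs.1 hv.1
  have hbdd_g : BddBelow {r | ∃ π ∈ TransportPolytope w w',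
      r = gwCost (fun a b => (a - b) ^ 2) C C' π} := by
    refine ⟨0, fun r hr => ?_⟩
    obtain ⟨π, hπ, rfl⟩ := hr
    exact hcnn π π hπ.1 hπ.1
  have hne_c : {r | ∃ πs ∈ TransportPolytope w w', ∃ πv ∈ TransportPolytope w w',
      r = cootCost (fun a b => (a - b) ^ 2) C C' πs πv}.Nonempty :=
    ⟨_, _, hprod, _, hprod, rfl⟩
  have hne_g : {r | ∃ π ∈ TransportPolytope w w',
      r = gwCost (fun a b => (a - b) ^ 2) C C' π}.Nonempty := ⟨_, _, hprod, rfl⟩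
  simp only [COOT, GW]
  apply le_antisymm
  · exact csInf_le_csInf hbdd_c hne_g fun r hr => by
      obtain ⟨π, hπ, rfl⟩ := hr
      exact ⟨π, hπ, π, hπ, rfl⟩
  · refine le_csInf hne_c ?_
    rintro r ⟨πs, hs, πv, hv, rfl⟩
    have hkey := gw_add_le X X' C C' hC hC' w w' πs πv hs hv
    have h1 : sInf {r | ∃ π ∈ TransportPolytope w w',
        r = gwCost (fun a b => (a - b) ^ 2) C C' π}
        ≤ gwCost (fun a b => (a - b) ^ 2) C C' πs := csInf_le hbdd_g ⟨πs, hs, rfl⟩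
    have h2 : sInf {r | ∃ π ∈ TransportPolytope w w',
        r = gwCost (fun a b => (a - b) ^ 2) C C' π}
        ≤ gwCost (fun a b => (a - b) ^ 2) C C' πv := csInf_le hbdd_g ⟨πv, hv, rfl⟩
    linarith
end

section
/- Let X ∈ ℝ^{n×p} and X' ∈ ℝ^{n'×p'} be matrices, let C ∈ ℝ^{n×n} be the squared Euclidean distance matrix of X and C' ∈ ℝ^{n'×n'} the squared Euclidean distance matrix of X', let L(a,b) = (a−b)², and let w ∈ ℝ^n, w' ∈ ℝ^{n'} be probability vectors. If the pair (π^s, π^v) ∈ Π(w,w') × Π(w,w') attains the infimum defining COOT(C, C', w, w', w, w'), then both π^s and π^v attain the infimum defining GW(C, C', w, w'). -/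
open Finset Matrix

section helpers
variable {n n' : ℕ}

lemma quad_split (δ : Matrix (Fin n) (Fin n') ℝ) (c : ℝ) (F H : Fin n → ℝ) (G M : Fin n' → ℝ) :
    ∑ i, ∑ j, ∑ k, ∑ l, c * F i * G j * H k * M l * δ i j * δ k l
      = c * (∑ i, ∑ j, F i * G j * δ i j) * (∑ k, ∑ l, H k * M l * δ k l) := by
  have h1 : ∀ i j, (∑ k, ∑ l, c * F i * G j * H k * M l * δ i j * δ k l)
      = (c * F i * G j * δ i j) * ∑ k, ∑ l, H k * M l * δ k l := by
    intro i j
    rw [Finset.mul_sum]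
    refine Finset.sum_congr rfl fun k _ => ?_
    rw [Finset.mul_sum]
    exact Finset.sum_congr rfl fun l _ => by ring
  simp_rw [h1, ← Finset.sum_mul]
  congr 1
  rw [Finset.mul_sum]
  refine Finset.sum_congr rfl fun i _ => ?_
  rw [Finset.mul_sum]
  exact Finset.sum_congr rfl fun j _ => by ring

lemma S_one_right (δ : Matrix (Fin n) (Fin n') ℝ) (hr : ∀ i, ∑ j, δ i j = 0) (F : Fin n → ℝ) :
    (∑ i, ∑ j, F i * 1 * δ i j) = 0 := by
  refine Finset.sum_eq_zero fun i _ => ?_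
  simp_rw [mul_one]
  rw [← Finset.mul_sum, hr, mul_zero]

lemma S_one_left (δ : Matrix (Fin n) (Fin n') ℝ) (hc : ∀ j, ∑ i, δ i j = 0) (G : Fin n' → ℝ) :
    (∑ i, ∑ j, (1:ℝ) * G j * δ i j) = 0 := by
  rw [Finset.sum_comm]
  refine Finset.sum_eq_zero fun j _ => ?_
  simp_rw [one_mul]
  rw [← Finset.mul_sum, hc, mul_zero]

lemma core_sq (δ : Matrix (Fin n) (Fin n') ℝ)
    (hr : ∀ i, ∑ j, δ i j = 0) (hc : ∀ j, ∑ i, δ i j = 0)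
    (a : Fin n → ℝ) (b : Fin n' → ℝ) :
    ∑ i, ∑ j, ∑ k, ∑ l, (a i - a k)^2 * (b j - b l)^2 * δ i j * δ k l
      = 4 * (∑ i, ∑ j, a i * b j * δ i j)^2 := by
  have expand : ∀ (i : Fin n) (j : Fin n') (k : Fin n) (l : Fin n'),
      (a i - a k)^2 * (b j - b l)^2 * δ i j * δ k l =
        (1:ℝ) * (a i^2) * (b j^2) * 1 * 1 * δ i j * δ k l
      + ((-2:ℝ) * (a i^2) * (b j) * 1 * (b l) * δ i j * δ k l
      + ((1:ℝ) * (a i^2) * 1 * 1 * (b l^2) * δ i j * δ k l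
      + ((-2:ℝ) * (a i) * (b j^2) * (a k) * 1 * δ i j * δ k l
      + ((4:ℝ) * (a i) * (b j) * (a k) * (b l) * δ i j * δ k l
      + ((-2:ℝ) * (a i) * 1 * (a k) * (b l^2) * δ i j * δ k l
      + ((1:ℝ) * 1 * (b j^2) * (a k^2) * 1 * δ i j * δ k l
      + ((-2:ℝ) * 1 * (b j) * (a k^2) * (b l) * δ i j * δ k l
      + (1:ℝ) * 1 * 1 * (a k^2) * (b l^2) * δ i j * δ k l))))))) := by
    intros; ring
  simp_rw [expand, Finset.sum_add_distrib]
  rw [quad_split, quad_split, quad_split, quad_split, quad_split, quad_split, quad_split,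
    quad_split, quad_split]
  simp only [S_one_right δ hr, S_one_left δ hc]
  ring

end helpers
section helpers2
variable {n n' : ℕ}

lemma sum5_comm {α : Type*} [Fintype α]
    (f : Fin n → Fin n' → Fin n → Fin n' → α → ℝ) :
    ∑ i, ∑ j, ∑ k, ∑ l, ∑ s, f i j k l s
      = ∑ s, ∑ i, ∑ j, ∑ k, ∑ l, f i j k l s := by
  have h3 : ∀ (i : Fin n) (j : Fin n') (k : Fin n),
      ∑ l, ∑ s, f i j k l s = ∑ s, ∑ l, f i j k l s := fun _ _ _ => Finset.sum_comm
  simp_rw [h3]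
  have h2 : ∀ (i : Fin n) (j : Fin n'),
      ∑ k, ∑ s, ∑ l, f i j k l s = ∑ s, ∑ k, ∑ l, f i j k l s := fun _ _ => Finset.sum_comm
  simp_rw [h2]
  have h1 : ∀ (i : Fin n),
      ∑ j, ∑ s, ∑ k, ∑ l, f i j k l s = ∑ s, ∑ j, ∑ k, ∑ l, f i j k l s :=
    fun _ => Finset.sum_comm
  simp_rw [h1]
  exact Finset.sum_comm

lemma sum4_swap_s12 (f : Fin n → Fin n' → Fin n → Fin n' → ℝ) :
    ∑ i, ∑ j, ∑ k, ∑ l, f i j k l = ∑ i, ∑ j, ∑ k, ∑ l, f k l i j := by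
  have h : ∀ (i : Fin n) (j : Fin n'), ∑ k, ∑ l, f i j k l = ∑ k, ∑ l, (fun k l i j => f i j k l) k l i j :=
    fun _ _ => rfl
  calc ∑ i, ∑ j, ∑ k, ∑ l, f i j k l
      = ∑ i, ∑ k, ∑ j, ∑ l, f i j k l := by
        refine Finset.sum_congr rfl fun i _ => Finset.sum_comm
    _ = ∑ k, ∑ i, ∑ j, ∑ l, f i j k l := Finset.sum_comm
    _ = ∑ k, ∑ i, ∑ l, ∑ j, f i j k l := by
        refine Finset.sum_congr rfl fun k _ => Finset.sum_congr rfl fun i _ => Finset.sum_comm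
    _ = ∑ k, ∑ l, ∑ i, ∑ j, f i j k l := by
        refine Finset.sum_congr rfl fun k _ => Finset.sum_comm

lemma zc (δ : Matrix (Fin n) (Fin n') ℝ) (hr : ∀ i, ∑ j, δ i j = 0)
    (f : Fin n → Fin n → ℝ) :
    ∑ i, ∑ j, ∑ k, ∑ l, f i k * δ i j * δ k l = 0 := by
  refine Finset.sum_eq_zero fun i _ => Finset.sum_eq_zero fun j _ =>
    Finset.sum_eq_zero fun k _ => ?_
  rw [← Finset.mul_sum, hr, mul_zero]

lemma zc' (δ : Matrix (Fin n) (Fin n') ℝ) (hc : ∀ j, ∑ i, δ i j = 0)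
    (g : Fin n' → Fin n' → ℝ) :
    ∑ i, ∑ j, ∑ k, ∑ l, g j l * δ i j * δ k l = 0 := by
  refine Finset.sum_eq_zero fun i _ => Finset.sum_eq_zero fun j _ => ?_
  rw [Finset.sum_comm]
  refine Finset.sum_eq_zero fun l _ => ?_
  have : ∀ k : Fin n, g j l * δ i j * δ k l = (g j l * δ i j) * δ k l := fun _ => rfl
  rw [← Finset.mul_sum, hc, mul_zero]

end helpers2

set_option maxHeartbeats 1000000 in
lemma key_ineq {n p n' p' : ℕ}
    (X : Matrix (Fin n) (Fin p) ℝ) (X' : Matrix (Fin n') (Fin p') ℝ)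
    (C : Matrix (Fin n) (Fin n) ℝ) (C' : Matrix (Fin n') (Fin n') ℝ)
    (hC : ∀ i k, C i k = ∑ s, (X i s - X k s) ^ 2)
    (hC' : ∀ j l, C' j l = ∑ s, (X' j s - X' l s) ^ 2)
    (w : Fin n → ℝ) (w' : Fin n' → ℝ)
    (πa πb : Matrix (Fin n) (Fin n') ℝ)
    (ha : πa ∈ TransportPolytope w w') (hb : πb ∈ TransportPolytope w w') :
    cootCost (fun a b => (a - b) ^ 2) C C' πa πa
        + cootCost (fun a b => (a - b) ^ 2) C C' πb πb
      ≤ 2 * cootCost (fun a b => (a - b) ^ 2) C C' πa πb := by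
  set δ : Matrix (Fin n) (Fin n') ℝ := fun i j => πa i j - πb i j with hδ
  have hr : ∀ i, ∑ j, δ i j = 0 := by
    intro i
    simp only [hδ]
    rw [Finset.sum_sub_distrib, ha.2.1 i, hb.2.1 i, sub_self]
  have hcol : ∀ j, ∑ i, δ i j = 0 := by
    intro j
    simp only [hδ]
    rw [Finset.sum_sub_distrib, ha.2.2 j, hb.2.2 j, sub_self]
  have hCs : ∀ i k, C k i = C i k := by
    intro i k
    rw [hC, hC]
    exact Finset.sum_congr rfl fun s _ => by ring
  have hC's : ∀ j l, C' l j = C' j l := by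
    intro j l
    rw [hC', hC']
    exact Finset.sum_congr rfl fun s _ => by ring
  have swap : cootCost (fun a b => (a - b) ^ 2) C C' πb πa
      = cootCost (fun a b => (a - b) ^ 2) C C' πa πb := by
    unfold cootCost
    rw [sum4_swap_s12 (fun i j k l => (C i k - C' j l) ^ 2 * πb i j * πa k l)]
    refine Finset.sum_congr rfl fun i _ => Finset.sum_congr rfl fun j _ =>
      Finset.sum_congr rfl fun k _ => Finset.sum_congr rfl fun l _ => ?_
    show (C k i - C' l j) ^ 2 * πb k l * πa i j = (C i k - C' j l) ^ 2 * πa i j * πb k l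
    rw [hCs i k, hC's j l]
    ring
  have key : cootCost (fun a b => (a - b) ^ 2) C C' πa πa
        + cootCost (fun a b => (a - b) ^ 2) C C' πb πb
        - cootCost (fun a b => (a - b) ^ 2) C C' πa πb
        - cootCost (fun a b => (a - b) ^ 2) C C' πb πa
      = ∑ i, ∑ j, ∑ k, ∑ l, (C i k - C' j l) ^ 2 * δ i j * δ k l := by
    unfold cootCost
    have hpt : ∀ (i : Fin n) (j : Fin n') (k : Fin n) (l : Fin n'),
        (C i k - C' j l) ^ 2 * δ i j * δ k l
          = (C i k - C' j l) ^ 2 * πa i j * πa k l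
            + (C i k - C' j l) ^ 2 * πb i j * πb k l
            - (C i k - C' j l) ^ 2 * πa i j * πb k l
            - (C i k - C' j l) ^ 2 * πb i j * πa k l := by
      intro i j k l
      simp only [hδ]
      ring
    simp only [hpt, Finset.sum_add_distrib, Finset.sum_sub_distrib]
  have decomp : ∑ i, ∑ j, ∑ k, ∑ l, (C i k - C' j l) ^ 2 * δ i j * δ k l
      = (∑ i, ∑ j, ∑ k, ∑ l, (C i k) ^ 2 * δ i j * δ k l)
        + (∑ i, ∑ j, ∑ k, ∑ l, (C' j l) ^ 2 * δ i j * δ k l)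
        - 2 * ∑ i, ∑ j, ∑ k, ∑ l, C i k * C' j l * δ i j * δ k l := by
    have hpt : ∀ (i : Fin n) (j : Fin n') (k : Fin n) (l : Fin n'),
        (C i k - C' j l) ^ 2 * δ i j * δ k l
          = (C i k) ^ 2 * δ i j * δ k l + (C' j l) ^ 2 * δ i j * δ k l
            - 2 * (C i k * C' j l * δ i j * δ k l) := by
      intro i j k l; ring
    simp only [hpt, Finset.sum_add_distrib, Finset.sum_sub_distrib, ← Finset.mul_sum]
  have hQ : 0 ≤ ∑ i, ∑ j, ∑ k, ∑ l, C i k * C' j l * δ i j * δ k l := by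
    have hpt : ∀ (i : Fin n) (j : Fin n') (k : Fin n) (l : Fin n'),
        C i k * C' j l * δ i j * δ k l
          = ∑ s, ∑ t, (X i s - X k s) ^ 2 * (X' j t - X' l t) ^ 2 * δ i j * δ k l := by
      intro i j k l
      rw [hC i k, hC' j l, Finset.sum_mul_sum]
      simp only [Finset.sum_mul]
    simp only [hpt]
    rw [sum5_comm (fun i j k l s =>
      ∑ t, (X i s - X k s) ^ 2 * (X' j t - X' l t) ^ 2 * δ i j * δ k l)]
    refine Finset.sum_nonneg fun s _ => ?_
    rw [sum5_comm (fun i j k l t =>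
      (X i s - X k s) ^ 2 * (X' j t - X' l t) ^ 2 * δ i j * δ k l)]
    refine Finset.sum_nonneg fun t _ => ?_
    rw [core_sq δ hr hcol (fun i => X i s) (fun j => X' j t)]
    positivity
  rw [zc δ hr (fun i k => (C i k) ^ 2), zc' δ hcol (fun j l => (C' j l) ^ 2)] at decomp
  linarith [key, decomp, swap, hQ]

theorem coot_optimal_gives_gw_optimal {n p n' p' : ℕ}
    (X : Matrix (Fin n) (Fin p) ℝ) (X' : Matrix (Fin n') (Fin p') ℝ)
    (C : Matrix (Fin n) (Fin n) ℝ) (C' : Matrix (Fin n') (Fin n') ℝ)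
    (hC : ∀ i k, C i k = ∑ s, (X i s - X k s) ^ 2)
    (hC' : ∀ j l, C' j l = ∑ s, (X' j s - X' l s) ^ 2)
    (w : Fin n → ℝ) (w' : Fin n' → ℝ)
    (hw : IsProbVec w) (hw' : IsProbVec w')
    (πs πv : Matrix (Fin n) (Fin n') ℝ)
    (hπs : πs ∈ TransportPolytope w w') (hπv : πv ∈ TransportPolytope w w')
    (hopt : cootCost (fun a b => (a - b) ^ 2) C C' πs πv
      = COOT (fun a b => (a - b) ^ 2) C C' w w' w w') :
    gwCost (fun a b => (a - b) ^ 2) C C' πs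
        = GW (fun a b => (a - b) ^ 2) C C' w w' ∧
      gwCost (fun a b => (a - b) ^ 2) C C' πv
        = GW (fun a b => (a - b) ^ 2) C C' w w' := by
  set L : ℝ → ℝ → ℝ := fun a b => (a - b) ^ 2 with hL
  have hnn : ∀ (πa πb : Matrix (Fin n) (Fin n') ℝ),
      πa ∈ TransportPolytope w w' → πb ∈ TransportPolytope w w' →
      0 ≤ cootCost L C C' πa πb := by
    intro πa πb ha hb
    refine Finset.sum_nonneg fun i _ => Finset.sum_nonneg fun j _ =>
      Finset.sum_nonneg fun k _ => Finset.sum_nonneg fun l _ => ?_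
    exact mul_nonneg (mul_nonneg (sq_nonneg (C i k - C' j l)) (ha.1 i j)) (hb.1 k l)
  have hbddc : BddBelow {r | ∃ πs ∈ TransportPolytope w w', ∃ πv ∈ TransportPolytope w w',
      r = cootCost L C C' πs πv} := by
    refine ⟨0, fun r hrm => ?_⟩
    obtain ⟨pa, hpa, pb, hpb, hre⟩ := hrm
    rw [hre]
    exact hnn pa pb hpa hpb
  have hgw_eq_coot : ∀ π : Matrix (Fin n) (Fin n') ℝ, gwCost L C C' π = cootCost L C C' π π :=
    fun _ => rfl
  have h1 : cootCost L C C' πs πv ≤ cootCost L C C' πs πs := by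
    rw [hopt]
    exact csInf_le hbddc ⟨πs, hπs, πs, hπs, rfl⟩
  have h2 : cootCost L C C' πs πv ≤ cootCost L C C' πv πv := by
    rw [hopt]
    exact csInf_le hbddc ⟨πv, hπv, πv, hπv, rfl⟩
  have h3 := key_ineq X X' C C' hC hC' w w' πs πv hπs hπv
  rw [← hL] at h3
  have e1 : cootCost L C C' πs πs = cootCost L C C' πs πv := by linarith
  have e2 : cootCost L C C' πv πv = cootCost L C C' πs πv := by linarith
  have hsub : {r | ∃ π ∈ TransportPolytope w w', r = gwCost L C C' π}
      ⊆ {r | ∃ πs ∈ TransportPolytope w w', ∃ πv ∈ TransportPolytope w w',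
          r = cootCost L C C' πs πv} := by
    rintro r ⟨π, hπ, hre⟩
    exact ⟨π, hπ, π, hπ, hre⟩
  have hle : COOT L C C' w w' w w' ≤ GW L C C' w w' :=
    csInf_le_csInf hbddc ⟨gwCost L C C' πs, πs, hπs, rfl⟩ hsub
  have hge : GW L C C' w w' ≤ gwCost L C C' πs :=
    csInf_le (BddBelow.mono hsub hbddc) ⟨πs, hπs, rfl⟩
  have hge' : GW L C C' w w' ≤ gwCost L C C' πv :=
    csInf_le (BddBelow.mono hsub hbddc) ⟨πv, hπv, rfl⟩
  constructor
  · refine le_antisymm ?_ hge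
    calc gwCost L C C' πs = cootCost L C C' πs πv := by rw [hgw_eq_coot, e1]
      _ ≤ GW L C C' w w' := hopt ▸ hle
  · refine le_antisymm ?_ hge'
    calc gwCost L C C' πv = cootCost L C C' πs πv := by rw [hgw_eq_coot, e2]
      _ ≤ GW L C C' w w' := hopt ▸ hle
end

section
/- Let Q ∈ ℝ^{m×m} be symmetric positive semi-definite, c ∈ ℝ^m, A ∈ ℝ^{k×m}, b ∈ ℝ^k, P = {x ∈ ℝ^m : Ax = b, x ≥ 0}, f(x) = cᵀx + ½xᵀQx, and g(x,y) = ½cᵀx + ½cᵀy + ½xᵀQy. If z* maximizes f over P and (x*, y*) maximizes g over P×P, then f(z*) = g(x*, y*); in particular the optimal values of the quadratic program max_{x∈P} f(x) and the bilinear program max_{(x,y)∈P×P} g(x,y) coincide. -/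
open Matrix

/-- The feasible polytope `P = {x : A x = b, x ≥ 0}`. -/
def FeasSet {m k : ℕ} (A : Matrix (Fin k) (Fin m) ℝ) (b : Fin k → ℝ) :
    Set (Fin m → ℝ) :=
  {x | A.mulVec x = b ∧ ∀ i, 0 ≤ x i}

/-- The quadratic program objective `f(x) = cᵀx + ½ xᵀQx`. -/
noncomputable def qpObj {m : ℕ} (Q : Matrix (Fin m) (Fin m) ℝ) (c : Fin m → ℝ)
    (x : Fin m → ℝ) : ℝ :=
  c ⬝ᵥ x + (1 / 2) * (x ⬝ᵥ Q.mulVec x)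

/-- The bilinear program objective `g(x,y) = ½cᵀx + ½cᵀy + ½ xᵀQy`. -/
noncomputable def bpObj {m : ℕ} (Q : Matrix (Fin m) (Fin m) ℝ) (c : Fin m → ℝ)
    (x y : Fin m → ℝ) : ℝ :=
  (1 / 2) * (c ⬝ᵥ x) + (1 / 2) * (c ⬝ᵥ y) + (1 / 2) * (x ⬝ᵥ Q.mulVec y)

theorem qp_bp_optimal_values_eq {m k : ℕ}
    (Q : Matrix (Fin m) (Fin m) ℝ) (hQsymm : Q.IsSymm)
    (hQpsd : ∀ z : Fin m → ℝ, 0 ≤ z ⬝ᵥ Q.mulVec z)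
    (c : Fin m → ℝ) (A : Matrix (Fin k) (Fin m) ℝ) (b : Fin k → ℝ)
    (z x y : Fin m → ℝ)
    (hz : z ∈ FeasSet A b)
    (hzmax : ∀ u ∈ FeasSet A b, qpObj Q c u ≤ qpObj Q c z)
    (hx : x ∈ FeasSet A b) (hy : y ∈ FeasSet A b)
    (hxymax : ∀ u ∈ FeasSet A b, ∀ v ∈ FeasSet A b,
      bpObj Q c u v ≤ bpObj Q c x y) :
    qpObj Q c z = bpObj Q c x y := by
  have hsym : x ⬝ᵥ Q.mulVec y = y ⬝ᵥ Q.mulVec x := by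
    rw [Matrix.dotProduct_mulVec, ← Matrix.mulVec_transpose, hQsymm,
      dotProduct_comm]
  have hpsd := hQpsd (x - y)
  rw [Matrix.mulVec_sub, sub_dotProduct, dotProduct_sub,
    dotProduct_sub] at hpsd
  have h1 : qpObj Q c z ≤ bpObj Q c x y := by
    have := hxymax z hz z hz
    simp only [qpObj, bpObj] at this ⊢
    linarith
  have hfx := hzmax x hx
  have hfy := hzmax y hy
  have h2 : bpObj Q c x y ≤ qpObj Q c z := by
    simp only [qpObj, bpObj] at hfx hfy ⊢
    linarith
  linarith
end

section
/- Let Q ∈ ℝ^{m×m} be symmetric positive semi-definite, c ∈ ℝ^m, A ∈ ℝ^{k×m}, b ∈ ℝ^k, P = {x ∈ ℝ^m : Ax = b, x ≥ 0}, f(x) = cᵀx + ½xᵀQx, and g(x,y) = ½cᵀx + ½cᵀy + ½xᵀQy. If x* maximizes f over P and a maximizer of g over P×P exists, then the pair (x*, x*) maximizes g over P×P. -/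
open Matrix

theorem qp_max_gives_bp_max {m k : ℕ}
    (Q : Matrix (Fin m) (Fin m) ℝ) (hQsymm : Q.IsSymm)
    (hQpsd : ∀ z : Fin m → ℝ, 0 ≤ z ⬝ᵥ Q.mulVec z)
    (c : Fin m → ℝ) (A : Matrix (Fin k) (Fin m) ℝ) (b : Fin k → ℝ)
    (x : Fin m → ℝ)
    (hx : x ∈ FeasSet A b)
    (hxmax : ∀ u ∈ FeasSet A b, qpObj Q c u ≤ qpObj Q c x)
    (hexists : ∃ x₀ ∈ FeasSet A b, ∃ y₀ ∈ FeasSet A b,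
      ∀ u ∈ FeasSet A b, ∀ v ∈ FeasSet A b, bpObj Q c u v ≤ bpObj Q c x₀ y₀) :
    ∀ u ∈ FeasSet A b, ∀ v ∈ FeasSet A b, bpObj Q c u v ≤ bpObj Q c x x := by
  intro u hu v hv
  have hsym : ∀ a b : Fin m → ℝ, a ⬝ᵥ Q.mulVec b = b ⬝ᵥ Q.mulVec a := by
    intro a b
    rw [dotProduct_mulVec, ← mulVec_transpose, hQsymm, dotProduct_comm]
  have key : bpObj Q c u v ≤ (1/2) * qpObj Q c u + (1/2) * qpObj Q c v := by
    have h := hQpsd (u - v)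
    have hexpand : (u - v) ⬝ᵥ Q.mulVec (u - v)
        = u ⬝ᵥ Q.mulVec u + v ⬝ᵥ Q.mulVec v - 2 * (u ⬝ᵥ Q.mulVec v) := by
      simp only [Matrix.mulVec_sub, sub_dotProduct, dotProduct_sub, hsym v u]
      ring
    rw [hexpand] at h
    simp only [bpObj, qpObj]
    nlinarith
  have hgx : bpObj Q c x x = qpObj Q c x := by
    simp only [bpObj, qpObj]; ring
  have h1 := hxmax u hu
  have h2 := hxmax v hv
  rw [hgx]
  nlinarith
end

section
/- Let Q ∈ ℝ^{m×m} be symmetric positive semi-definite, c ∈ ℝ^m, A ∈ ℝ^{k×m}, b ∈ ℝ^k, P = {x ∈ ℝ^m : Ax = b, x ≥ 0}, f(x) = cᵀx + ½xᵀQx, and g(x,y) = ½cᵀx + ½cᵀy + ½xᵀQy. If (x*, y*) maximizes g over P×P, then both x* and y* maximize f over P. -/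
open Matrix

theorem bp_max_gives_qp_max {m k : ℕ}
    (Q : Matrix (Fin m) (Fin m) ℝ) (hQsymm : Q.IsSymm)
    (hQpsd : ∀ z : Fin m → ℝ, 0 ≤ z ⬝ᵥ Q.mulVec z)
    (c : Fin m → ℝ) (A : Matrix (Fin k) (Fin m) ℝ) (b : Fin k → ℝ)
    (x y : Fin m → ℝ)
    (hx : x ∈ FeasSet A b) (hy : y ∈ FeasSet A b)
    (hxymax : ∀ u ∈ FeasSet A b, ∀ v ∈ FeasSet A b,
      bpObj Q c u v ≤ bpObj Q c x y) :
    (∀ u ∈ FeasSet A b, qpObj Q c u ≤ qpObj Q c x) ∧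
      (∀ u ∈ FeasSet A b, qpObj Q c u ≤ qpObj Q c y) := by
  have hsymm : ∀ u v : Fin m → ℝ, u ⬝ᵥ Q.mulVec v = v ⬝ᵥ Q.mulVec u := by
    intro u v
    rw [dotProduct_mulVec, ← mulVec_transpose, hQsymm.eq, dotProduct_comm]
  have hdiag : ∀ u : Fin m → ℝ, bpObj Q c u u = qpObj Q c u := by
    intro u; simp [bpObj, qpObj]; ring
  have h1 := hxymax x hx x hx
  have h2 := hxymax y hy y hy
  have hpsd := hQpsd (x - y)
  have hexp : (x - y) ⬝ᵥ Q.mulVec (x - y)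
      = x ⬝ᵥ Q.mulVec x + y ⬝ᵥ Q.mulVec y - 2 * (x ⬝ᵥ Q.mulVec y) := by
    rw [mulVec_sub, dotProduct_sub, sub_dotProduct, sub_dotProduct, hsymm y x]
    ring
  rw [hexp] at hpsd
  have heq : bpObj Q c x y = qpObj Q c x ∧ bpObj Q c x y = qpObj Q c y := by
    rw [hdiag x] at h1; rw [hdiag y] at h2
    simp only [bpObj, qpObj] at *
    constructor <;> nlinarith [hpsd, h1, h2]
  constructor <;> intro u hu <;>
    [rw [← heq.1]; rw [← heq.2]] <;>
    calc qpObj Q c u = bpObj Q c u u := (hdiag u).symm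
      _ ≤ bpObj Q c x y := hxymax u hu u hu
end

section
/- Let Q ∈ ℝ^{m×m} be symmetric, c ∈ ℝ^m, and let P ⊆ ℝ^m be any set. Define g(x,y) = ½cᵀx + ½cᵀy + ½xᵀQy. If (x*, y*) maximizes g over P×P, then (x* − y*)ᵀ Q (x* − y*) ≤ 0; if moreover Q is positive semi-definite, then Q(x* − y*) = 0, cᵀ(x* − y*) = 0, and g(x*, y*) = g(x*, x*) = g(y*, y*). -/
open Matrix

theorem bp_aux {m : ℕ}
    (Q : Matrix (Fin m) (Fin m) ℝ) (hQsymm : Q.IsSymm)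
    (c : Fin m → ℝ) (P : Set (Fin m → ℝ))
    (x y : Fin m → ℝ) (hx : x ∈ P) (hy : y ∈ P)
    (hxymax : ∀ u ∈ P, ∀ v ∈ P,
      ((1 : ℝ) / 2) * (c ⬝ᵥ u) + (1 / 2) * (c ⬝ᵥ v) + (1 / 2) * (u ⬝ᵥ Q.mulVec v) ≤
      (1 / 2) * (c ⬝ᵥ x) + (1 / 2) * (c ⬝ᵥ y) + (1 / 2) * (x ⬝ᵥ Q.mulVec y)) :
    (x - y) ⬝ᵥ Q.mulVec (x - y) ≤ 0 ∧
      ((∀ z : Fin m → ℝ, 0 ≤ z ⬝ᵥ Q.mulVec z) →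
        Q.mulVec (x - y) = 0 ∧ c ⬝ᵥ (x - y) = 0 ∧
          (1 / 2) * (x ⬝ᵥ Q.mulVec y) + (1/2) * (c ⬝ᵥ y) =
            (1 / 2) * (x ⬝ᵥ Q.mulVec x) + (1/2) * (c ⬝ᵥ x) ∧
          (1 / 2) * (x ⬝ᵥ Q.mulVec y) + (1/2) * (c ⬝ᵥ x) =
            (1 / 2) * (y ⬝ᵥ Q.mulVec y) + (1/2) * (c ⬝ᵥ y)) := by
  have hsymm : ∀ u v : Fin m → ℝ, u ⬝ᵥ Q.mulVec v = v ⬝ᵥ Q.mulVec u := by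
    intro u v
    rw [Matrix.dotProduct_mulVec, ← Matrix.mulVec_transpose, hQsymm.eq, dotProduct_comm]
  have e1 : (x - y) ⬝ᵥ Q.mulVec (x - y) =
      x ⬝ᵥ Q.mulVec x - 2 * (x ⬝ᵥ Q.mulVec y) + y ⬝ᵥ Q.mulVec y := by
    simp only [Matrix.mulVec_sub, sub_dotProduct, dotProduct_sub, hsymm y x]
    ring
  have hxx := hxymax x hx x hx
  have hyy := hxymax y hy y hy
  have h1 : (x - y) ⬝ᵥ Q.mulVec (x - y) ≤ 0 := by rw [e1]; linarith
  refine ⟨h1, fun hpsd => ?_⟩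
  have hs0 : (x - y) ⬝ᵥ Q.mulVec (x - y) = 0 := le_antisymm h1 (hpsd _)
  have hker : Q.mulVec (x - y) = 0 := by
    funext i
    have key : ∀ w : Fin m → ℝ, w ⬝ᵥ Q.mulVec (x - y) = 0 := by
      intro w
      set a := w ⬝ᵥ Q.mulVec (x - y) with ha
      set b := w ⬝ᵥ Q.mulVec w with hb
      have hb0 : 0 ≤ b := hpsd w
      have ht : ∀ t : ℝ, 0 ≤ 2 * t * a + t ^ 2 * b := by
        intro t
        have := hpsd ((x - y) + t • w)
        have expand : ((x - y) + t • w) ⬝ᵥ Q.mulVec ((x - y) + t • w) =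
            (x - y) ⬝ᵥ Q.mulVec (x - y) + 2 * t * a + t ^ 2 * b := by
          simp only [Matrix.mulVec_add, add_dotProduct, dotProduct_add,
            Matrix.mulVec_smul, smul_dotProduct, dotProduct_smul,
            smul_eq_mul, ha, hb, hsymm (x - y) w]
          ring
        rw [expand, hs0] at this
        linarith
      rcases eq_or_lt_of_le hb0 with hbz | hbp
      · have h2 := ht (-a)
        nlinarith [sq_nonneg a]
      · have h2 := ht (-a / b)
        have hbne : b ≠ 0 := ne_of_gt hbp
        have key : 2 * (-a / b) * a + (-a / b) ^ 2 * b = -(a ^ 2) / b := by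
          field_simp; ring
        rw [key] at h2
        have h5 : a ^ 2 / b = 0 :=
          le_antisymm (by linarith [neg_div b (a ^ 2)])
            (div_nonneg (sq_nonneg a) hbp.le)
        have h6 : a ^ 2 = 0 := (div_eq_zero_iff.mp h5).resolve_right hbne
        exact pow_eq_zero_iff (by norm_num) |>.mp h6
    have := key (Pi.single i 1)
    simpa [dotProduct, Pi.single_apply, Finset.sum_ite_eq'] using this
  have hxd : x ⬝ᵥ Q.mulVec (x - y) = 0 := by rw [hker]; simp
  have hyd : y ⬝ᵥ Q.mulVec (x - y) = 0 := by rw [hker]; simp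
  have hxd' : x ⬝ᵥ Q.mulVec x = x ⬝ᵥ Q.mulVec y := by
    have := hxd; rw [Matrix.mulVec_sub, dotProduct_sub] at this; linarith
  have hyd' : y ⬝ᵥ Q.mulVec x = y ⬝ᵥ Q.mulVec y := by
    have := hyd; rw [Matrix.mulVec_sub, dotProduct_sub] at this; linarith
  have hyx : y ⬝ᵥ Q.mulVec x = x ⬝ᵥ Q.mulVec y := hsymm y x
  have hcxy : c ⬝ᵥ x = c ⬝ᵥ y := by linarith [hxx, hyy]
  have hc : c ⬝ᵥ (x - y) = 0 := by
    rw [dotProduct_sub]; linarith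
  exact ⟨hker, hc, by linarith, by linarith⟩

theorem final {m : ℕ}
    (Q : Matrix (Fin m) (Fin m) ℝ) (hQsymm : Q.IsSymm)
    (c : Fin m → ℝ) (P : Set (Fin m → ℝ))
    (x y : Fin m → ℝ) (hx : x ∈ P) (hy : y ∈ P)
    (hxymax : ∀ u ∈ P, ∀ v ∈ P,
      ((1 : ℝ) / 2) * (c ⬝ᵥ u) + (1 / 2) * (c ⬝ᵥ v) + (1 / 2) * (u ⬝ᵥ Q.mulVec v) ≤
      (1 / 2) * (c ⬝ᵥ x) + (1 / 2) * (c ⬝ᵥ y) + (1 / 2) * (x ⬝ᵥ Q.mulVec y)) :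
    (x - y) ⬝ᵥ Q.mulVec (x - y) ≤ 0 ∧
      ((∀ z : Fin m → ℝ, 0 ≤ z ⬝ᵥ Q.mulVec z) →
        Q.mulVec (x - y) = 0 ∧ c ⬝ᵥ (x - y) = 0 ∧
          (1 / 2) * (c ⬝ᵥ x) + (1 / 2) * (c ⬝ᵥ y) + (1 / 2) * (x ⬝ᵥ Q.mulVec y) =
            (1 / 2) * (c ⬝ᵥ x) + (1 / 2) * (c ⬝ᵥ x) + (1 / 2) * (x ⬝ᵥ Q.mulVec x) ∧
          (1 / 2) * (c ⬝ᵥ x) + (1 / 2) * (c ⬝ᵥ y) + (1 / 2) * (x ⬝ᵥ Q.mulVec y) =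
            (1 / 2) * (c ⬝ᵥ y) + (1 / 2) * (c ⬝ᵥ y) + (1 / 2) * (y ⬝ᵥ Q.mulVec y)) := by
  obtain ⟨h1, h2⟩ := bp_aux Q hQsymm c P x y hx hy hxymax
  exact ⟨h1, fun hpsd => by obtain ⟨a, b, d, e⟩ := h2 hpsd; exact ⟨a, b, by linarith, by linarith⟩⟩

theorem bp_maximizer_diff_in_kernel {m : ℕ}
    (Q : Matrix (Fin m) (Fin m) ℝ) (hQsymm : Q.IsSymm)
    (c : Fin m → ℝ) (P : Set (Fin m → ℝ))
    (x y : Fin m → ℝ) (hx : x ∈ P) (hy : y ∈ P)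
    (hxymax : ∀ u ∈ P, ∀ v ∈ P, bpObj Q c u v ≤ bpObj Q c x y) :
    (x - y) ⬝ᵥ Q.mulVec (x - y) ≤ 0 ∧
      ((∀ z : Fin m → ℝ, 0 ≤ z ⬝ᵥ Q.mulVec z) →
        Q.mulVec (x - y) = 0 ∧ c ⬝ᵥ (x - y) = 0 ∧
          bpObj Q c x y = bpObj Q c x x ∧ bpObj Q c x y = bpObj Q c y y) := by
  simp only [bpObj] at hxymax ⊢
  exact final Q hQsymm c P x y hx hy hxymax
end

section
/- Let X ∈ ℝ^{n×d}, X' ∈ ℝ^{n'×d'} be matrices, w ∈ ℝ^n, w' ∈ ℝ^{n'}, v ∈ ℝ^d, v' ∈ ℝ^{d'} probability vectors, and suppose the cost function L : ℝ×ℝ → ℝ decomposes as L(a,b) = f₁(a) + f₂(b) − h₁(a)h₂(b) for functions f₁, f₂, h₁, h₂ : ℝ → ℝ. Then for all π^s ∈ Π(w,w') and π^v ∈ Π(v,v'), ∑_{i,j,k,l} L(X_{i,k}, X'_{j,l}) π^s_{i,j} π^v_{k,l} = ∑_{i,k} f₁(X_{i,k}) w_i v_k + ∑_{j,l} f₂(X'_{j,l})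 w'_j v'_l − ∑_{i,j,k,l} h₁(X_{i,k}) h₂(X'_{j,l}) π^s_{i,j} π^v_{k,l}. -/
open Finset Matrix

theorem decomposable_loss_tensor_decomposition {n d n' d' : ℕ}
    (X : Matrix (Fin n) (Fin d) ℝ) (X' : Matrix (Fin n') (Fin d') ℝ)
    (w : Fin n → ℝ) (w' : Fin n' → ℝ) (v : Fin d → ℝ) (v' : Fin d' → ℝ)
    (hw : IsProbVec w) (hw' : IsProbVec w') (hv : IsProbVec v) (hv' : IsProbVec v')
    (L : ℝ → ℝ → ℝ) (f₁ f₂ h₁ h₂ : ℝ → ℝ)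
    (hL : ∀ a b, L a b = f₁ a + f₂ b - h₁ a * h₂ b)
    (πs : Matrix (Fin n) (Fin n') ℝ) (πv : Matrix (Fin d) (Fin d') ℝ)
    (hπs : πs ∈ TransportPolytope w w') (hπv : πv ∈ TransportPolytope v v') :
    ∑ i, ∑ j, ∑ k, ∑ l, L (X i k) (X' j l) * πs i j * πv k l
      = (∑ i, ∑ k, f₁ (X i k) * w i * v k)
        + (∑ j, ∑ l, f₂ (X' j l) * w' j * v' l)
        - ∑ i, ∑ j, ∑ k, ∑ l, h₁ (X i k) * h₂ (X' j l) * πs i j * πv k l := by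
  obtain ⟨-, hs1, hs2⟩ := hπs
  obtain ⟨-, hv1, hv2⟩ := hπv
  have key : ∑ i, ∑ j, ∑ k, ∑ l, L (X i k) (X' j l) * πs i j * πv k l
      = (∑ i, ∑ j, ∑ k, ∑ l, f₁ (X i k) * πs i j * πv k l)
        + (∑ i, ∑ j, ∑ k, ∑ l, f₂ (X' j l) * πs i j * πv k l)
        - ∑ i, ∑ j, ∑ k, ∑ l, h₁ (X i k) * h₂ (X' j l) * πs i j * πv k l := by
    simp only [hL, sub_mul, add_mul, Finset.sum_sub_distrib, Finset.sum_add_distrib,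
      mul_assoc]
  rw [key]
  congr 2
  · calc ∑ i, ∑ j, ∑ k, ∑ l, f₁ (X i k) * πs i j * πv k l
        = ∑ i, ∑ j, ∑ k, f₁ (X i k) * πs i j * v k := by
          refine Finset.sum_congr rfl fun i _ => Finset.sum_congr rfl fun j _ =>
            Finset.sum_congr rfl fun k _ => ?_
          rw [← Finset.mul_sum, hv1]
      _ = ∑ i, ∑ k, f₁ (X i k) * w i * v k := by
          refine Finset.sum_congr rfl fun i _ => ?_
          rw [Finset.sum_comm]
          refine Finset.sum_congr rfl fun k _ => ?_
          simp only [mul_comm, ← Finset.mul_sum, hs1]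
  · calc ∑ i, ∑ j, ∑ k, ∑ l, f₂ (X' j l) * πs i j * πv k l
        = ∑ j, ∑ l, ∑ i, ∑ k, f₂ (X' j l) * πs i j * πv k l := by
          rw [Finset.sum_comm]
          refine Finset.sum_congr rfl fun j _ => ?_
          rw [show (∑ y : Fin n, ∑ x : Fin d, ∑ l : Fin d', f₂ (X' j l) * πs y j * πv x l)
            = ∑ y : Fin n, ∑ l : Fin d', ∑ x : Fin d, f₂ (X' j l) * πs y j * πv x l from
            Finset.sum_congr rfl fun y _ => Finset.sum_comm, Finset.sum_comm]
      _ = ∑ j, ∑ l, f₂ (X' j l) * w' j * v' l := by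
          refine Finset.sum_congr rfl fun j _ => Finset.sum_congr rfl fun l _ => ?_
          simp only [mul_assoc, ← Finset.mul_sum]
          rw [hv2, ← Finset.sum_mul, hs2]
end
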